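/- arXiv:2505.15366 — 10 statements merged into one kernel-verified Lean document; each statement's English description precedes it below -/
import Mathlib

section
/- For every finite set M of at least 3 points in the plane in general position, there exists a finite set B of at most 2|M| points such that B is disjoint from M, the set M ∪ B is in general position, and there is no subset H ⊆ M with |H| ≥ 3 satisfying convexHull(H) ∩ (M ∪ B) = H. (In particular, M contains no k-hole with respect to M ∪ B for any k ≥ 3, so Breaker wins the one-round bichromatic Maker-Breaker game with bias 1:2.) -/
open Set

/-- A set of points in the plane is in general position if no three distinct
points of it are collinear. -/
def GenPos (S : Set (ℝ × ℝ)) : Prop :=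
  ∀ p ∈ S, ∀ q ∈ S, ∀ r ∈ S, p ≠ q → p ≠ r → q ≠ r →
    ¬ Collinear ℝ ({p, q, r} : Set (ℝ × ℝ))

/-!
Fix a linear functional `f` injective on `M` and a vector `v ≠ 0` with `f v = 0`. Any `H ⊆ M`
with three points contains `p, m, r` with `f p < f m < f r`, and then `v` or `-v` points from
the vertex `m` into the interior of the triangle `p m r`. Hence, for each `m ∈ M` and
`w ∈ {v, -v}`, the interiors of all triangles at `m` into which `w` points share a nonempty open
set near `m`. Placing one point in each of these `2 |M|` open sets, off every line through two
points already placed, puts a point outside `M` into the convex hull of every such `H`.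
-/

open Filter Topology MeasureTheory

theorem Finset.exists_lt_lt_of_injOn {α β : Type*} [LinearOrder β] {s : Finset α} {f : α → β}
    (hf : InjOn f s) (hs : 2 < s.card) : ∃ p ∈ s, ∃ m ∈ s, ∃ r ∈ s, f p < f m ∧ f m < f r := by
  classical
  obtain ⟨p, hp, hpmin⟩ := s.exists_min_image f (Finset.card_pos.1 (by omega))
  obtain ⟨r, hr, hrmax⟩ := s.exists_max_image f (Finset.card_pos.1 (by omega))
  obtain ⟨m, hm⟩ : ((s.erase p).erase r).Nonempty := by
    rw [← Finset.card_pos]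
    grw [← Finset.pred_card_le_card_erase, ← Finset.pred_card_le_card_erase]
    omega
  simp only [Finset.mem_erase] at hm
  obtain ⟨hmr, hmp, hm⟩ := hm
  exact ⟨p, hp, m, hm, r, hr, (hpmin m hm).lt_of_ne (hf.ne hp hm (Ne.symm hmp)),
    (hrmax m hm).lt_of_ne (hf.ne hm hr hmr)⟩

theorem exists_isOpen_nonempty_subset_of_eventually {α ι X : Type*} [TopologicalSpace X]
    {l : Filter α} [l.NeBot] {I : Set ι} (hI : I.Finite) {V : ι → Set X}
    (hV : ∀ i, IsOpen (V i)) (c : α → X) :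
    ∃ U, IsOpen U ∧ U.Nonempty ∧ ∀ i ∈ I, (∀ᶠ s in l, c s ∈ V i) → U ⊆ V i := by
  have hJ : {i ∈ I | ∀ᶠ s in l, c s ∈ V i}.Finite := hI.subset (sep_subset _ _)
  refine ⟨⋂ i ∈ {i ∈ I | ∀ᶠ s in l, c s ∈ V i}, V i, hJ.isOpen_biInter fun i _ => hV i, ?_,
    fun i hi hc => biInter_subset_of_mem ⟨hi, hc⟩⟩
  obtain ⟨s, hs⟩ := ((eventually_all_finite hJ).2 fun i hi => hi.2).exists
  exact ⟨c s, mem_iInter₂.2 hs⟩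

section

variable {E : Type*} [NormedAddCommGroup E] [NormedSpace ℝ E]

theorem AffineBasis.coord_add_smul {ι : Type*} (b : AffineBasis ι ℝ E) (i : ι) (x w : E) (s : ℝ) :
    b.coord i (x + s • w) = b.coord i x + s * (b.coord i).linear w := by
  rw [add_comm x, ← vadd_eq_add, AffineMap.map_vadd, map_smul, smul_eq_mul, vadd_eq_add, add_comm]

theorem AffineBasis.eventually_add_smul_mem_interior_convexHull {ι : Type*} [Finite ι]
    (b : AffineBasis ι ℝ E) (j : ι) {w : E} (hw : ∀ i ≠ j, 0 < (b.coord i).linear w) :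
    ∀ᶠ s in 𝓝[>] (0 : ℝ), b j + s • w ∈ interior (convexHull ℝ (range b)) := by
  simp only [b.interior_convexHull, mem_ofPred_eq, b.coord_add_smul]
  refine eventually_all.2 fun i => ?_
  rcases eq_or_ne i j with rfl | hij
  · rw [b.coord_apply_eq]
    have : Tendsto (fun s : ℝ => 1 + s * (b.coord i).linear w) (𝓝 0) (𝓝 1) :=
      (by fun_prop : Continuous fun s : ℝ => 1 + s * (b.coord i).linear w).tendsto' 0 1 (by simp)
    exact (tendsto_nhdsWithin_of_tendsto_nhds this).eventually (eventually_gt_nhds one_pos)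
  · filter_upwards [self_mem_nhdsWithin] with s hs
    rw [b.coord_apply_ne hij, zero_add]
    exact mul_pos hs (hw i hij)

theorem exists_eventually_add_smul_mem_interior_convexHull_triple (hE : Module.finrank ℝ E = 2)
    (f : E →ₗ[ℝ] ℝ) {p m r w : E} (hpmr : ¬ Collinear ℝ {p, m, r}) (hp : f p < f m)
    (hr : f m < f r) (hw : w ≠ 0) (hfw : f w = 0) :
    ∃ w' ∈ ({w, -w} : Set E),
      ∀ᶠ s in 𝓝[>] (0 : ℝ), m + s • w' ∈ interior (convexHull ℝ {p, m, r}) := by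
  have : FiniteDimensional ℝ E := .of_finrank_pos (by omega)
  have hind := affineIndependent_iff_not_collinear_set.2 hpmr
  let b : AffineBasis (Fin 3) ℝ E :=
    ⟨![p, m, r], hind, hind.affineSpan_eq_top_iff_card_eq_finrank_add_one.2 (by simp [hE])⟩
  have hrange : range b = {p, m, r} := by
    change range ![p, m, r] = _
    simp_rw [Matrix.range_cons, Matrix.range_empty, Set.singleton_union, insert_empty_eq]
  set g : Fin 3 → ℝ := fun i => (b.coord i).linear w
  have hg_sum : g 0 + g 1 + g 2 = 0 := by
    have h := b.sum_coord_apply_eq_one (m + (1 : ℝ) • w)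
    simp only [b.coord_add_smul, one_mul, Finset.sum_add_distrib, b.sum_coord_apply_eq_one] at h
    rw [Fin.sum_univ_three] at h
    linarith
  have hw_sum : ∑ i, g i • b i = w := by
    have h := b.linear_combination_coord_eq_self (m + (1 : ℝ) • w)
    simp only [b.coord_add_smul, one_mul, add_smul, Finset.sum_add_distrib] at h
    rwa [b.linear_combination_coord_eq_self, one_smul, add_right_inj] at h
  have hfg : g 0 * (f p - f m) + g 2 * (f r - f m) = 0 := by
    have h := congrArg f hw_sum
    rw [map_sum, hfw, Fin.sum_univ_three] at h
    simp only [map_smul, smul_eq_mul] at h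
    change g 0 * f p + g 1 * f m + g 2 * f r = 0 at h
    linear_combination h - f m * hg_sum
  have hg0 : g 0 ≠ 0 := by
    intro h0
    have hg2 : g 2 = 0 := by simpa [h0, (sub_pos.2 hr).ne'] using hfg
    apply hw
    rw [← hw_sum, Fin.sum_univ_three, h0, hg2, show g 1 = 0 by linarith]
    simp
  rw [← hrange]
  rcases hg0.lt_or_gt with hg0 | hg0
  · refine ⟨-w, by simp, b.eventually_add_smul_mem_interior_convexHull 1 fun i hi => ?_⟩
    have hg2 : g 2 < 0 := by nlinarith [mul_pos_of_neg_of_neg hg0 (sub_neg.2 hp)]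
    fin_cases i <;> simp_all [g]
  · refine ⟨w, by simp, b.eventually_add_smul_mem_interior_convexHull 1 fun i hi => ?_⟩
    have hg2 : 0 < g 2 := by nlinarith [mul_neg_of_pos_of_neg hg0 (sub_neg.2 hp)]
    fin_cases i <;> simp_all [g]

end

theorem exists_linearMap_injOn_ker_ne_bot {S : Set (ℝ × ℝ)} (hS : S.Finite) :
    ∃ f : ℝ × ℝ →ₗ[ℝ] ℝ, InjOn f S ∧ ∃ v ≠ 0, f v = 0 := by
  -- `x.1 + θ * x.2 = y.1 + θ * y.2` with `x.2 ≠ y.2` forces `θ = (y.1 - x.1) / (x.2 - y.2)`.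
  obtain ⟨θ, hθ⟩ := ((hS.prod hS).image
    fun q : (ℝ × ℝ) × (ℝ × ℝ) => (q.2.1 - q.1.1) / (q.1.2 - q.2.2)).infinite_compl.nonempty
  refine ⟨LinearMap.fst ℝ ℝ ℝ + θ • LinearMap.snd ℝ ℝ ℝ, fun x hx y hy hxy => ?_,
    (-θ, 1), by simp, by simp⟩
  simp only [LinearMap.add_apply, LinearMap.fst_apply, LinearMap.smul_apply, LinearMap.snd_apply,
    smul_eq_mul] at hxy
  by_cases h2 : x.2 = y.2
  · exact Prod.ext (by rw [h2] at hxy; linarith) h2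
  · refine absurd ⟨(x, y), ⟨hx, hy⟩, ?_⟩ hθ
    field_simp [sub_ne_zero.2 h2]
    linarith

theorem affineSpan_pair_ne_top (x y : ℝ × ℝ) : line[ℝ, x, y] ≠ ⊤ := by
  intro h
  have := collinear_pair ℝ x y
  rw [Collinear, ← direction_affineSpan, h, AffineSubspace.direction_top, rank_top, rank_prod',
    Module.rank_self] at this
  norm_num at this

theorem GenPos.insert_of_not_collinear {S : Set (ℝ × ℝ)} (hS : GenPos S) {b : ℝ × ℝ}
    (hb : ∀ x ∈ S, ∀ y ∈ S, x ≠ y → ¬ Collinear ℝ {b, x, y}) : GenPos (insert b S) := by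
  rintro p (rfl | hp) q (rfl | hq) r (rfl | hr) hpq hpr hqr
  · exact absurd rfl hpq
  · exact absurd rfl hpq
  · exact absurd rfl hpr
  · exact hb q hq r hr hqr
  · exact absurd rfl hqr
  · rw [Set.insert_comm]; exact hb p hp r hr hpr
  · rw [Set.pair_comm, Set.insert_comm]; exact hb p hp q hq hpq
  · exact hS p hp q hq r hr hpq hpr hqr

theorem GenPos.exists_insert_of_isOpen {S : Set (ℝ × ℝ)} (hS : S.Finite) (hgp : GenPos S)
    {U : Set (ℝ × ℝ)} (hU : IsOpen U) (hne : U.Nonempty) :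
    ∃ b ∈ U, b ∉ S ∧ GenPos (insert b S) := by
  set N := ⋃ x ∈ S, ⋃ y ∈ S, (line[ℝ, x, y] : Set (ℝ × ℝ))
  have hN : volume N = 0 := (measure_biUnion_null_iff hS.countable).2 fun x _ =>
    (measure_biUnion_null_iff hS.countable).2 fun y _ =>
      Measure.addHaar_affineSubspace _ _ (affineSpan_pair_ne_top x y)
  obtain ⟨b, hbU, hbN⟩ : (U \ N).Nonempty := nonempty_of_measure_ne_zero <| by
    rw [measure_sdiff_null hN]; exact (hU.measure_pos volume hne).ne'
  refine ⟨b, hbU, fun hb => hbN ?_, hgp.insert_of_not_collinear fun x hx y hy hxy hcol => hbN ?_⟩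
  · exact mem_biUnion hb (mem_biUnion hb (left_mem_affineSpan_pair ℝ b b))
  · exact mem_biUnion hx (mem_biUnion hy
      (hcol.mem_affineSpan_of_mem_of_ne (by simp) (by simp) (by simp) hxy))

theorem GenPos.exists_union_forall_exists_mem {ι : Type*} {S : Set (ℝ × ℝ)} (hS : S.Finite)
    (hgp : GenPos S) (I : Finset ι) (U : ι → Set (ℝ × ℝ)) (hU : ∀ i ∈ I, IsOpen (U i))
    (hne : ∀ i ∈ I, (U i).Nonempty) :
    ∃ B : Finset (ℝ × ℝ), B.card ≤ I.card ∧ Disjoint (B : Set (ℝ × ℝ)) S ∧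
      GenPos (S ∪ B) ∧ ∀ i ∈ I, ∃ b ∈ B, b ∈ U i := by
  classical
  induction I using Finset.induction_on with
  | empty => exact ⟨∅, by simp, by simp, by simpa using hgp, by simp⟩
  | insert i I hi ih =>
    obtain ⟨B, hcard, hdisj, hBgp, hmeet⟩ :=
      ih (fun j hj => hU j (Finset.mem_insert_of_mem hj))
        (fun j hj => hne j (Finset.mem_insert_of_mem hj))
    obtain ⟨b, hbU, hbSB, hgp'⟩ := hBgp.exists_insert_of_isOpen (hS.union B.finite_toSet)
      (hU i (Finset.mem_insert_self i I)) (hne i (Finset.mem_insert_self i I))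
    refine ⟨insert b B, ?_, ?_, ?_, ?_⟩
    · grw [Finset.card_insert_le, Finset.card_insert_of_notMem hi, hcard]
    · rw [Finset.coe_insert, Set.disjoint_insert_left]
      exact ⟨fun h => hbSB (Or.inl h), hdisj⟩
    · rwa [Finset.coe_insert, Set.union_insert]
    · rw [Finset.forall_mem_insert]
      refine ⟨⟨b, Finset.mem_insert_self b B, hbU⟩, fun j hj => ?_⟩
      obtain ⟨c, hc, hcU⟩ := hmeet j hj
      exact ⟨c, Finset.mem_insert_of_mem hc, hcU⟩

theorem one_round_breaker_bias_two_general (M : Finset (ℝ × ℝ))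
    (hgp : GenPos ↑M) :
    ∃ B : Finset (ℝ × ℝ), B.card ≤ 2 * M.card ∧
      Disjoint (B : Set (ℝ × ℝ)) (M : Set (ℝ × ℝ)) ∧
      GenPos ((M : Set (ℝ × ℝ)) ∪ ↑B) ∧
      ¬ ∃ H : Finset (ℝ × ℝ), (H : Set (ℝ × ℝ)) ⊆ ↑M ∧ 3 ≤ H.card ∧
          convexHull ℝ (H : Set (ℝ × ℝ)) ∩ ((M : Set (ℝ × ℝ)) ∪ ↑B) = ↑H := by
  obtain ⟨f, hf, v, hv, hfv⟩ := exists_linearMap_injOn_ker_ne_bot M.finite_toSet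
  choose U hU hUne hUsub using fun i : (ℝ × ℝ) × (ℝ × ℝ) =>
    exists_isOpen_nonempty_subset_of_eventually (l := 𝓝[>] (0 : ℝ))
      (M.finite_toSet.prod M.finite_toSet) (fun _ => isOpen_interior)
      (V := fun q => interior (convexHull ℝ {q.1, i.1, q.2})) fun s => i.1 + s • i.2
  obtain ⟨B, hBcard, hBM, hBgp, hBU⟩ := hgp.exists_union_forall_exists_mem M.finite_toSet
    (M ×ˢ {v, -v}) U (fun i _ => hU i) (fun i _ => hUne i)
  refine ⟨B, hBcard.trans ?_, hBM, hBgp, ?_⟩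
  · rw [Finset.card_product, mul_comm]
    gcongr
    exact Finset.card_le_two
  rintro ⟨H, hHM, hH, hHB⟩
  obtain ⟨p, hp, m, hm, r, hr, hpm, hmr⟩ := H.exists_lt_lt_of_injOn (hf.mono hHM) hH
  have hpmr : ¬ Collinear ℝ {p, m, r} := hgp p (hHM hp) m (hHM hm) r (hHM hr)
    (ne_of_apply_ne f hpm.ne) (ne_of_apply_ne f (hpm.trans hmr).ne) (ne_of_apply_ne f hmr.ne)
  obtain ⟨w, hw, hev⟩ :=
    exists_eventually_add_smul_mem_interior_convexHull_triple (by simp) f hpmr hpm hmr hv hfv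
  obtain ⟨b, hbB, hbU⟩ := hBU (m, w) (Finset.mem_product.2 ⟨hHM hm, by simpa using hw⟩)
  have hbH : b ∈ convexHull ℝ ↑H :=
    convexHull_mono (by simp [insert_subset_iff, hp, hm, hr])
      (interior_subset (hUsub (m, w) (p, r) ⟨hHM hp, hHM hr⟩ hev hbU))
  exact disjoint_left.1 hBM hbB (hHM (hHB ▸ ⟨hbH, Or.inr hbB⟩))

theorem one_round_breaker_bias_two (M : Finset (ℝ × ℝ)) (hM : 3 ≤ M.card)
    (hgp : GenPos ↑M) :
    ∃ B : Finset (ℝ × ℝ), B.card ≤ 2 * M.card ∧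
      Disjoint (B : Set (ℝ × ℝ)) (M : Set (ℝ × ℝ)) ∧
      GenPos ((M : Set (ℝ × ℝ)) ∪ ↑B) ∧
      ¬ ∃ H : Finset (ℝ × ℝ), (H : Set (ℝ × ℝ)) ⊆ ↑M ∧ 3 ≤ H.card ∧
          convexHull ℝ (H : Set (ℝ × ℝ)) ∩ ((M : Set (ℝ × ℝ)) ∪ ↑B) = ↑H :=
  one_round_breaker_bias_two_general M hgp
end

section
/- For every finite set M of points in the plane in general position, there exists a finite set B with |B| ≤ 2|M| such that B is disjoint from M, the set M ∪ B is in general position, and for every three distinct points a, b, c ∈ M the topological interior of convexHull{a, b, c} contains a point of B. -/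
open Set

/-!
Choose a slope `t` such that the lines of slope `t` through the points of `M` are pairwise
distinct, and order the points by the intercept of that line. In every triangle of `M` the line of
slope `t` through the middle vertex `p` crosses the opposite side, so the triangle's interior
contains `p + ε u` for all small `ε > 0`, for one of the two directions `u = ±(1, t)`. Hence for
each `p` and each of the two directions, the triangles that are entered in that way have an open
set of common interior points, and it suffices to pick one point in each of these `2 |M|` open
sets. This can be done greedily: a nonempty open set is not covered by the finitely many lines
through two chosen points, since lines are Lebesgue-null.
-/

open Filter Topology MeasureTheory

theorem affineSpan_pair_ne_top_s1 {E : Type*} [AddCommGroup E] [Module ℝ E]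
    [FiniteDimensional ℝ E] (hE : 1 < Module.finrank ℝ E) (y z : E) : line[ℝ, y, z] ≠ ⊤ := by
  intro h
  have h1 := (collinear_pair ℝ y z).finrank_le_one
  rw [← direction_affineSpan, h, AffineSubspace.direction_top, finrank_top] at h1
  omega

theorem GenPos.insert {S : Set (ℝ × ℝ)} (hS : GenPos S) {x : ℝ × ℝ}
    (hx : ∀ y ∈ S, ∀ z ∈ S, y ≠ z → x ∉ line[ℝ, y, z]) : GenPos (insert x S) := by
  intro p hp q hq r hr hpq hpr hqr hcol
  rcases hp with rfl | hp <;> rcases hq with rfl | hq <;> rcases hr with rfl | hr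
  · exact hpq rfl
  · exact hpq rfl
  · exact hpr rfl
  · exact hx q hq r hr hqr (hcol.mem_affineSpan_of_mem_of_ne (by simp) (by simp) (by simp) hqr)
  · exact hqr rfl
  · exact hx p hp r hr hpr (hcol.mem_affineSpan_of_mem_of_ne (by simp) (by simp) (by simp) hpr)
  · exact hx p hp q hq hpq (hcol.mem_affineSpan_of_mem_of_ne (by simp) (by simp) (by simp) hpq)
  · exact hS p hp q hq r hr hpq hpr hqr hcol

theorem exists_mem_genPos_insert {S : Finset (ℝ × ℝ)} (hS : GenPos ↑S) {U : Set (ℝ × ℝ)}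
    (hUo : IsOpen U) (hUne : U.Nonempty) : ∃ x ∈ U, x ∉ S ∧ GenPos (insert x ↑S) := by
  set L := ⋃ y ∈ S, ⋃ z ∈ S, (line[ℝ, y, z] : Set (ℝ × ℝ))
  have hL : volume L = 0 :=
    (measure_biUnion_null_iff S.countable_toSet).2 fun y _ =>
      (measure_biUnion_null_iff S.countable_toSet).2 fun z _ =>
        Measure.addHaar_affineSubspace _ _ (affineSpan_pair_ne_top_s1 (by simp) y z)
  obtain ⟨x, hxU, hxL⟩ : (U \ L).Nonempty := nonempty_of_measure_ne_zero <| by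
    rw [measure_sdiff_null hL]; exact (hUo.measure_pos volume hUne).ne'
  simp only [L, mem_iUnion, not_exists] at hxL
  -- the degenerate lines `line[ℝ, y, y] = {y}` keep `x` out of `S`
  exact ⟨x, hxU, fun hxS => hxL x hxS x hxS (left_mem_affineSpan_pair ℝ x x),
    hS.insert fun y hy z hz _ => hxL y hy z hz⟩

theorem exists_finset_genPos_union_meets {ι : Type*} {S : Finset (ℝ × ℝ)} (hS : GenPos ↑S)
    (I : Finset ι) {U : ι → Set (ℝ × ℝ)} (hUo : ∀ i ∈ I, IsOpen (U i))
    (hUne : ∀ i ∈ I, (U i).Nonempty) :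
    ∃ B : Finset (ℝ × ℝ), B.card ≤ I.card ∧ Disjoint (B : Set (ℝ × ℝ)) S ∧
      GenPos (↑S ∪ ↑B) ∧ ∀ i ∈ I, ∃ x ∈ B, x ∈ U i := by
  classical
  induction I using Finset.induction_on with
  | empty => exact ⟨∅, by simp, by simp, by simpa using hS, by simp⟩
  | insert i I hi ih =>
    obtain ⟨B, hcard, hdisj, hgp, hmeet⟩ := ih (fun j hj => hUo j (Finset.mem_insert_of_mem hj))
      (fun j hj => hUne j (Finset.mem_insert_of_mem hj))
    obtain ⟨x, hxU, hxSB, hgpx⟩ := exists_mem_genPos_insert (S := S ∪ B) (by simpa using hgp)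
      (hUo i (Finset.mem_insert_self i I)) (hUne i (Finset.mem_insert_self i I))
    refine ⟨insert x B, ?_, ?_, ?_, ?_⟩
    · rw [Finset.card_insert_of_notMem hi]
      exact (Finset.card_insert_le x B).trans (by omega)
    · simp only [Finset.mem_union, not_or] at hxSB
      simpa [hxSB.1] using hdisj
    · simpa [Set.union_insert] using hgpx
    · intro j hj
      rcases Finset.mem_insert.1 hj with rfl | hj
      · exact ⟨x, Finset.mem_insert_self x B, hxU⟩
      · obtain ⟨y, hyB, hyU⟩ := hmeet j hj
        exact ⟨y, Finset.mem_insert_of_mem hyB, hyU⟩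

theorem exists_isOpen_nonempty_subset_interiors {E ι : Type*} [TopologicalSpace E]
    (l : Filter E) [l.NeBot] (s : Finset ι) (T : ι → Set E) :
    ∃ U : Set E, IsOpen U ∧ U.Nonempty ∧
      ∀ i ∈ s, (∀ᶠ x in l, x ∈ interior (T i)) → U ⊆ interior (T i) := by
  classical
  set s' := s.filter fun i => ∀ᶠ x in l, x ∈ interior (T i)
  obtain ⟨x, hx⟩ := ((Finset.eventually_all s').2 fun i hi => (Finset.mem_filter.1 hi).2).exists
  exact ⟨⋂ i ∈ s', interior (T i), isOpen_biInter_finset fun _ _ => isOpen_interior,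
    ⟨x, mem_iInter₂.2 hx⟩, fun i hi hev => biInter_subset_of_mem (Finset.mem_filter.2 ⟨hi, hev⟩)⟩

theorem mem_interior_convexHull_triple {a b c : ℝ × ℝ} (h : ¬ Collinear ℝ {a, b, c})
    {α β γ : ℝ} (hα : 0 < α) (hβ : 0 < β) (hγ : 0 < γ) (hsum : α + β + γ = 1) :
    α • a + β • b + γ • c ∈ interior (convexHull ℝ {a, b, c}) := by
  have hind : AffineIndependent ℝ ![a, b, c] := affineIndependent_iff_not_collinear_set.2 h
  have hspan : affineSpan ℝ (range ![a, b, c]) = ⊤ := by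
    rw [hind.affineSpan_eq_top_iff_card_eq_finrank_add_one]
    simp
  let bas : AffineBasis (Fin 3) ℝ (ℝ × ℝ) := ⟨![a, b, c], hind, hspan⟩
  have hbas : ⇑bas = ![a, b, c] := rfl
  have hw : ∑ i, ![α, β, γ] i = 1 := by simp [Fin.sum_univ_three, hsum]
  have hcomb : Finset.univ.affineCombination ℝ bas ![α, β, γ] = α • a + β • b + γ • c := by
    rw [Finset.affineCombination_eq_linear_combination _ _ _ hw]
    simp [hbas, Fin.sum_univ_three]
  have hrange : range bas = {a, b, c} := by ext; simp [hbas]; tauto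
  rw [← hrange, bas.interior_convexHull, ← hcomb]
  intro i
  rw [bas.coord_apply_combination_of_mem (Finset.mem_univ i) hw]
  fin_cases i <;> simpa

/-- The `y`-intercept of the line of slope `t` through `x`. -/
def intercept (t : ℝ) : ℝ × ℝ →ₗ[ℝ] ℝ := LinearMap.snd ℝ ℝ ℝ - t • LinearMap.fst ℝ ℝ ℝ

theorem intercept_apply (t : ℝ) (x : ℝ × ℝ) : intercept t x = x.2 - t * x.1 := rfl

theorem exists_injOn_intercept (M : Finset (ℝ × ℝ)) : ∃ t, InjOn (intercept t) M := by
  obtain ⟨t, ht⟩ := Infinite.exists_notMem_finset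
    ((M ×ˢ M).image fun pq => (pq.1.2 - pq.2.2) / (pq.1.1 - pq.2.1))
  refine ⟨t, fun p hp q hq hpq => ?_⟩
  rw [intercept_apply, intercept_apply] at hpq
  by_cases h1 : p.1 = q.1
  · exact Prod.ext h1 (by rw [h1] at hpq; linarith)
  · refine absurd (Finset.mem_image.2 ⟨(p, q), Finset.mem_product.2 ⟨hp, hq⟩, ?_⟩) ht
    rw [div_eq_iff (sub_ne_zero.2 h1)]
    linarith

theorem exists_pos_smul_of_intercept_eq_zero {t : ℝ} {v : ℝ × ℝ} (hv : v ≠ 0)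
    (h : intercept t v = 0) :
    ∃ u ∈ ({(1, t), -(1, t)} : Finset (ℝ × ℝ)), ∃ τ : ℝ, 0 < τ ∧ v = τ • u := by
  rw [intercept_apply, sub_eq_zero] at h
  have hv' : v = v.1 • (1, t) := Prod.ext (by simp) (by simp [h, mul_comm])
  have h1 : v.1 ≠ 0 := fun h0 => hv (by rw [hv', h0, zero_smul])
  rcases h1.lt_or_gt with hneg | hpos
  · exact ⟨-(1, t), by simp, -v.1, neg_pos.2 hneg, by rw [neg_smul_neg]; exact hv'⟩
  · exact ⟨(1, t), by simp, v.1, hpos, hv'⟩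

theorem exists_ker_add_smul_mem_interior_triangle {g : ℝ × ℝ →ₗ[ℝ] ℝ} {a p c : ℝ × ℝ}
    (hcol : ¬ Collinear ℝ {a, p, c}) (hap : g a < g p) (hpc : g p < g c) :
    ∃ v, v ≠ 0 ∧ g v = 0 ∧
      ∀ μ ∈ Ioo (0 : ℝ) 1, p + μ • v ∈ interior (convexHull ℝ {a, p, c}) := by
  set r := (g p - g a) / (g c - g a)
  have hr0 : 0 < r := div_pos (sub_pos.2 hap) (by linarith)
  have hr1 : r < 1 := (div_lt_one (by linarith)).2 (by linarith)
  have hq : AffineMap.lineMap a c r = (1 - r) • a + r • c := AffineMap.lineMap_apply_module _ _ _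
  refine ⟨AffineMap.lineMap a c r - p, fun h => hcol ?_, ?_, fun μ ⟨hμ0, hμ1⟩ => ?_⟩
  · rw [insert_comm, ← sub_eq_zero.1 h]
    exact collinear_insert_of_mem_affineSpan_pair (AffineMap.lineMap_mem_affineSpan_pair r a c)
  · rw [hq, map_sub, map_add, map_smul, map_smul, smul_eq_mul, smul_eq_mul]
    simp only [r]
    field_simp [(sub_pos.2 (hap.trans hpc)).ne']
    ring
  · convert mem_interior_convexHull_triple hcol (mul_pos hμ0 (sub_pos.2 hr1)) (sub_pos.2 hμ1)
      (mul_pos hμ0 hr0) (by ring) using 1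
    rw [hq]
    module

theorem eventually_add_smul_mem_of_forall_Ioo {E : Type*} [AddCommGroup E] [Module ℝ E]
    {S : Set E} {p u : E} {τ : ℝ} (hτ : 0 < τ) (h : ∀ μ ∈ Ioo (0 : ℝ) 1, p + μ • τ • u ∈ S) :
    ∀ᶠ ε in 𝓝[>] (0 : ℝ), p + ε • u ∈ S := by
  filter_upwards [Ioo_mem_nhdsGT hτ] with ε ⟨hε0, hετ⟩
  simpa [smul_smul, div_mul_cancel₀ _ hτ.ne'] using
    h (ε / τ) ⟨div_pos hε0 hτ, (div_lt_one hτ).2 hετ⟩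

theorem exists_eventually_mem_interior_triangle {t : ℝ} {a p c : ℝ × ℝ}
    (hcol : ¬ Collinear ℝ {a, p, c}) (hap : intercept t a < intercept t p)
    (hpc : intercept t p < intercept t c) :
    ∃ u ∈ ({(1, t), -(1, t)} : Finset (ℝ × ℝ)),
      ∀ᶠ ε in 𝓝[>] (0 : ℝ), p + ε • u ∈ interior (convexHull ℝ {a, p, c}) := by
  obtain ⟨v, hv0, hgv, hseg⟩ := exists_ker_add_smul_mem_interior_triangle hcol hap hpc
  obtain ⟨u, hu, τ, hτ, rfl⟩ := exists_pos_smul_of_intercept_eq_zero hv0 hgv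
  exact ⟨u, hu, eventually_add_smul_mem_of_forall_Ioo hτ hseg⟩

theorem exists_lt_lt_of_injOn {α : Type*} {f : α → ℝ} {s : Set α} (hf : InjOn f s) {a b c : α}
    (ha : a ∈ s) (hb : b ∈ s) (hc : c ∈ s) (hab : a ≠ b) (hac : a ≠ c) (hbc : b ≠ c) :
    ∃ x y z, ({x, y, z} : Set α) = {a, b, c} ∧ f x < f y ∧ f y < f z := by
  rcases (hf.ne ha hb hab).lt_or_gt with h₁ | h₁ <;>
    rcases (hf.ne ha hc hac).lt_or_gt with h₂ | h₂ <;>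
    rcases (hf.ne hb hc hbc).lt_or_gt with h₃ | h₃
  all_goals first
    | exact absurd (h₁.trans h₃) h₂.not_gt
    | exact absurd (h₃.trans h₁) h₂.not_gt
    | exact ⟨a, b, c, rfl, h₁, h₃⟩
    | exact ⟨a, c, b, by rw [pair_comm], h₂, h₃⟩
    | exact ⟨b, a, c, insert_comm _ _ _, h₁, h₂⟩
    | exact ⟨b, c, a, by ext; simp only [mem_insert_iff, mem_singleton_iff]; tauto, h₃, h₂⟩
    | exact ⟨c, a, b, by ext; simp only [mem_insert_iff, mem_singleton_iff]; tauto, h₂, h₁⟩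
    | exact ⟨c, b, a, by ext; simp only [mem_insert_iff, mem_singleton_iff]; tauto, h₃, h₁⟩

theorem breaker_blocks_all_triangles (M : Finset (ℝ × ℝ)) (hgp : GenPos ↑M) :
    ∃ B : Finset (ℝ × ℝ), B.card ≤ 2 * M.card ∧
      Disjoint (B : Set (ℝ × ℝ)) (M : Set (ℝ × ℝ)) ∧
      GenPos ((M : Set (ℝ × ℝ)) ∪ ↑B) ∧
      ∀ a ∈ M, ∀ b ∈ M, ∀ c ∈ M, a ≠ b → a ≠ c → b ≠ c →
        ∃ x ∈ B, x ∈ interior (convexHull ℝ ({a, b, c} : Set (ℝ × ℝ))) := by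
  obtain ⟨t, ht⟩ := exists_injOn_intercept M
  choose U hUo hUne hU using fun pu : (ℝ × ℝ) × (ℝ × ℝ) =>
    exists_isOpen_nonempty_subset_interiors (map (fun ε : ℝ => pu.1 + ε • pu.2) (𝓝[>] 0))
      (M ×ˢ M) fun ac => convexHull ℝ ({ac.1, pu.1, ac.2} : Set (ℝ × ℝ))
  obtain ⟨B, hcard, hdisj, hgpB, hB⟩ := exists_finset_genPos_union_meets hgp
    (M ×ˢ {(1, t), -(1, t)}) (fun pu _ => hUo pu) (fun pu _ => hUne pu)
  refine ⟨B, hcard.trans ?_, hdisj, hgpB, fun a ha b hb c hc hab hac hbc => ?_⟩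
  · rw [Finset.card_product, mul_comm]
    exact Nat.mul_le_mul_right _ Finset.card_le_two
  obtain ⟨x, y, z, hxyz, hxy, hyz⟩ := exists_lt_lt_of_injOn ht ha hb hc hab hac hbc
  have hmem : ∀ w ∈ ({x, y, z} : Set (ℝ × ℝ)), w ∈ M := by
    rw [hxyz]
    rintro w (rfl | rfl | rfl) <;> assumption
  obtain ⟨u, hu, hev⟩ := exists_eventually_mem_interior_triangle
    (by rw [hxyz]; exact hgp a ha b hb c hc hab hac hbc) hxy hyz
  obtain ⟨q, hqB, hqU⟩ := hB (y, u) (Finset.mem_product.2 ⟨hmem y (by simp), hu⟩)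
  rw [← hxyz]
  exact ⟨q, hqB, hU (y, u) (x, z) (Finset.mem_product.2 ⟨hmem x (by simp), hmem z (by simp)⟩)
    hev hqU⟩
end

section
/- Let M, B ⊆ ℝ² with B disjoint from M and M in general position. Suppose that for every three distinct points a, b, c ∈ M the topological interior of convexHull{a, b, c} contains a point of B. Then there is no subset H ⊆ M with |H| ≥ 3 such that convexHull(H) ∩ (M ∪ B) = H; in particular, M contains no k-hole with respect to M ∪ B for any k ≥ 3. -/
open Set

theorem no_hole_of_blocked_triangles (M B : Set (ℝ × ℝ))
    (hdisj : Disjoint B M) (hgp : GenPos M)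
    (hblock : ∀ a ∈ M, ∀ b ∈ M, ∀ c ∈ M, a ≠ b → a ≠ c → b ≠ c →
      ∃ x ∈ B, x ∈ interior (convexHull ℝ ({a, b, c} : Set (ℝ × ℝ)))) :
    ¬ ∃ H : Finset (ℝ × ℝ), (H : Set (ℝ × ℝ)) ⊆ M ∧ 3 ≤ H.card ∧
        convexHull ℝ (H : Set (ℝ × ℝ)) ∩ (M ∪ B) = ↑H := by
  rintro ⟨H, hHM, hcard, hhole⟩
  obtain ⟨a, ha, b, hb, c, hc, hab, hac, hbc⟩ := (Finset.two_lt_card (s := H)).mp (by omega)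
  obtain ⟨x, hxB, hxI⟩ := hblock a (hHM ha) b (hHM hb) c (hHM hc) hab hac hbc
  have hxH : x ∈ (H : Set (ℝ × ℝ)) := by
    rw [← hhole]
    refine ⟨?_, Or.inr hxB⟩
    have := interior_subset hxI
    exact convexHull_mono (by
      intro p hp
      simp only [Set.mem_insert_iff, Set.mem_singleton_iff] at hp
      rcases hp with rfl | rfl | rfl <;> simpa) this
  exact hdisj.ne_of_mem hxB (hHM hxH) rfl
end

section
/- Let P and Q be nonempty finite subsets of ℝ² and let S ⊆ ℝ² be finite. Suppose (convexHull(P) + ray(d)) ∩ S = ∅ and (convexHull(Q) + ray(d)) ∩ S = ∅, where d = (0, −1). Then there exists δ₀ > 0 such that for every δ with |δ| < δ₀, setting v = (δ, −1): (i) (convexHull(P) + ray(v)) ∩ S = ∅ and (convexHull(Q) + ray(v)) ∩ S = ∅; and (ii) if (convexHull(P) + ray(d)) ∩ (convexHull(Q) + ray(d)) = ∅, then (convexHull(P) + ray(v)) ∩ (convexHull(Q) + ray(v)) = ∅. -/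
open Set Pointwise

/-- The ray (halfline) from the origin in direction `v`. -/
def ray (v : ℝ × ℝ) : Set (ℝ × ℝ) := {x | ∃ t : ℝ, 0 ≤ t ∧ x = t • v}

/-!
The vertical strip `K + ray (0, -1)` over a compact `K` is closed, so it has disjoint closed
`ε`-thickenings with any compact `A` it misses. The point `p + t • (δ, -1)` of the tilted strip
lies at distance `t * |δ|` from the point `p + t • (0, -1)` of the vertical one, and if it lies in
`A` then `t` is at most the height difference of `K` and `A`; hence for small `δ` the tilted strip
misses `A` too. Two strips in a common direction `v` meet only if one of them meets the other
base set, since `p + t • v = q + u • v` with `t ≤ u` gives `p = q + (u - t) • v`.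
-/

open Filter Metric Topology

lemma zero_mem_ray (v : ℝ × ℝ) : (0 : ℝ × ℝ) ∈ ray v := ⟨0, le_rfl, (zero_smul ℝ v).symm⟩

lemma ray_zero_neg_one : ray (0, -1) = {0} ×ˢ Iic 0 := by
  ext ⟨a, b⟩
  simp only [ray, mem_ofPred_eq, Prod.smul_mk, smul_eq_mul, mul_zero, mul_neg, mul_one,
    Prod.mk.injEq, mem_prod, mem_singleton_iff, mem_Iic]
  exact ⟨fun ⟨t, ht, ha, hb⟩ => ⟨ha, by linarith⟩, fun ⟨ha, hb⟩ => ⟨-b, by linarith, ha, by ring⟩⟩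

lemma isClosed_ray_zero_neg_one : IsClosed (ray (0, -1)) := by
  rw [ray_zero_neg_one]
  exact isClosed_singleton.prod isClosed_Iic

lemma disjoint_add_ray_add_ray {K L : Set (ℝ × ℝ)} {v : ℝ × ℝ}
    (hKL : Disjoint (K + ray v) L) (hLK : Disjoint K (L + ray v)) :
    Disjoint (K + ray v) (L + ray v) := by
  rw [Set.disjoint_left]
  rintro _ ⟨p, hp, _, ⟨t, ht, rfl⟩, rfl⟩ ⟨q, hq, _, ⟨u, hu, rfl⟩, hpq⟩
  dsimp only at hpq
  rcases le_total t u with htu | hut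
  · refine Set.disjoint_left.1 hLK hp ⟨q, hq, (u - t) • v, ⟨u - t, sub_nonneg.2 htu, rfl⟩, ?_⟩
    dsimp only
    rw [sub_smul, ← add_sub_assoc, hpq, add_sub_cancel_right]
  · refine Set.disjoint_left.1 hKL ⟨p, hp, (t - u) • v, ⟨t - u, sub_nonneg.2 hut, rfl⟩, ?_⟩ hq
    dsimp only
    rw [sub_smul, ← add_sub_assoc, ← hpq, add_sub_cancel_right]

lemma eventually_disjoint_add_ray {K A : Set (ℝ × ℝ)} (hK : IsCompact K) (hA : IsCompact A)
    (h : Disjoint (K + ray (0, -1)) A) : ∀ᶠ δ in 𝓝 0, Disjoint (K + ray (δ, -1)) A := by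
  obtain ⟨ε, hε, hεdisj⟩ :=
    h.symm.exists_cthickenings hA (isClosed_ray_zero_neg_one.add_left_of_isCompact hK)
  obtain ⟨M, hM⟩ := hK.bddAbove_image continuous_snd.continuousOn
  obtain ⟨m, hm⟩ := hA.bddBelow_image continuous_snd.continuousOn
  have hT : 0 < |M - m| + 1 := by positivity
  refine Metric.eventually_nhds_iff.2 ⟨ε / (|M - m| + 1), div_pos hε hT, fun δ hδ => ?_⟩
  rw [Real.dist_eq, sub_zero, lt_div_iff₀ hT] at hδ
  rw [Set.disjoint_left]
  rintro _ ⟨p, hp, _, ⟨t, ht, rfl⟩, rfl⟩ hpA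
  have htT : t ≤ |M - m| + 1 := by
    have hpM : p.2 ≤ M := hM (mem_image_of_mem _ hp)
    have hmp : m ≤ p.2 - t := by simpa [sub_eq_add_neg] using hm (mem_image_of_mem _ hpA)
    linarith [le_abs_self (M - m)]
  have hdist : dist (p + t • (δ, -1)) (p + t • (0, -1)) = t * |δ| := by
    simp only [Prod.dist_eq, dist_add_left, dist_smul₀, Real.norm_eq_abs, abs_of_nonneg ht,
      dist_zero_right, dist_self, abs_nonneg, sup_of_le_left]
  exact Set.disjoint_left.1 hεdisj (self_subset_cthickening _ hpA)
    (mem_cthickening_of_dist_le _ _ _ _ (add_mem_add hp ⟨t, ht, rfl⟩)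
      (by rw [hdist]; nlinarith [abs_nonneg δ]))

lemma eventually_disjoint_add_ray_add_ray {K L : Set (ℝ × ℝ)} (hK : IsCompact K)
    (hL : IsCompact L) (h : Disjoint (K + ray (0, -1)) (L + ray (0, -1))) :
    ∀ᶠ δ in 𝓝 0, Disjoint (K + ray (δ, -1)) (L + ray (δ, -1)) := by
  have hKL := eventually_disjoint_add_ray hK hL (h.mono_right (subset_add_left L (zero_mem_ray _)))
  have hLK := eventually_disjoint_add_ray hL hK
    (h.symm.mono_right (subset_add_left K (zero_mem_ray _)))
  filter_upwards [hKL, hLK] with δ hKL hLK using disjoint_add_ray_add_ray hKL hLK.symm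

theorem rotate_strips_general (P Q : Finset (ℝ × ℝ))
    (S : Finset (ℝ × ℝ))
    (hPS : (convexHull ℝ (P : Set (ℝ × ℝ)) + ray (0, -1)) ∩ ↑S = ∅)
    (hQS : (convexHull ℝ (Q : Set (ℝ × ℝ)) + ray (0, -1)) ∩ ↑S = ∅) :
    ∃ δ₀ : ℝ, 0 < δ₀ ∧ ∀ δ : ℝ, |δ| < δ₀ →
      ((convexHull ℝ (P : Set (ℝ × ℝ)) + ray (δ, -1)) ∩ ↑S = ∅ ∧
        (convexHull ℝ (Q : Set (ℝ × ℝ)) + ray (δ, -1)) ∩ ↑S = ∅) ∧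
      ((convexHull ℝ (P : Set (ℝ × ℝ)) + ray (0, -1)) ∩
          (convexHull ℝ (Q : Set (ℝ × ℝ)) + ray (0, -1)) = ∅ →
        (convexHull ℝ (P : Set (ℝ × ℝ)) + ray (δ, -1)) ∩
          (convexHull ℝ (Q : Set (ℝ × ℝ)) + ray (δ, -1)) = ∅) := by
  have hP := P.finite_toSet.isCompact_convexHull ℝ
  have hQ := Q.finite_toSet.isCompact_convexHull ℝ
  have hS := S.finite_toSet.isCompact
  simp only [← disjoint_iff_inter_eq_empty] at hPS hQS ⊢
  have hPQ := eventually_imp_distrib_left.2 (eventually_disjoint_add_ray_add_ray hP hQ)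
  obtain ⟨δ₀, hδ₀, h⟩ := Metric.eventually_nhds_iff.1
    ((eventually_disjoint_add_ray hP hS hPS).and ((eventually_disjoint_add_ray hQ hS hQS).and hPQ))
  refine ⟨δ₀, hδ₀, fun δ hδ => ?_⟩
  obtain ⟨hPδ, hQδ, hPQδ⟩ := h (by rwa [Real.dist_eq, sub_zero])
  exact ⟨⟨hPδ, hQδ⟩, hPQδ⟩

theorem rotate_strips (P Q : Finset (ℝ × ℝ)) (hP : P.Nonempty) (hQ : Q.Nonempty)
    (S : Finset (ℝ × ℝ))
    (hPS : (convexHull ℝ (P : Set (ℝ × ℝ)) + ray (0, -1)) ∩ ↑S = ∅)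
    (hQS : (convexHull ℝ (Q : Set (ℝ × ℝ)) + ray (0, -1)) ∩ ↑S = ∅) :
    ∃ δ₀ : ℝ, 0 < δ₀ ∧ ∀ δ : ℝ, |δ| < δ₀ →
      ((convexHull ℝ (P : Set (ℝ × ℝ)) + ray (δ, -1)) ∩ ↑S = ∅ ∧
        (convexHull ℝ (Q : Set (ℝ × ℝ)) + ray (δ, -1)) ∩ ↑S = ∅) ∧
      ((convexHull ℝ (P : Set (ℝ × ℝ)) + ray (0, -1)) ∩
          (convexHull ℝ (Q : Set (ℝ × ℝ)) + ray (0, -1)) = ∅ →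
        (convexHull ℝ (P : Set (ℝ × ℝ)) + ray (δ, -1)) ∩
          (convexHull ℝ (Q : Set (ℝ × ℝ)) + ray (δ, -1)) = ∅) :=
  rotate_strips_general P Q S hPS hQS
end

section
/- Let P and Q be finite subsets of ℝ² and let s ∈ P ∩ Q be a point such that every point of P ∖ {s} has first coordinate strictly smaller than that of s, and every point of Q ∖ {s} has first coordinate strictly larger than that of s. Then there exists δ₀ > 0 such that for every δ with |δ| < δ₀, setting v = (δ, −1), one has (convexHull(P) + ray(v)) ∩ (convexHull(Q) + ray(v)) = {s} + ray(v). -/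
open Set Pointwise

lemma hull_face_eq {f : ℝ × ℝ → ℝ} (hf : IsLinearMap ℝ f) (P : Finset (ℝ × ℝ)) (s : ℝ × ℝ)
    (hs : s ∈ P) (h : ∀ p ∈ P, p ≠ s → f p < f s) (x : ℝ × ℝ)
    (hx : x ∈ convexHull ℝ (P : Set (ℝ × ℝ))) (hfx : f s ≤ f x) : x = s := by
  classical
  rw [Finset.convexHull_eq] at hx
  obtain ⟨w, hw0, hw1, hwx⟩ := hx
  rw [Finset.centerMass_eq_of_sum_1 _ _ hw1] at hwx
  have hfxsum : f x = ∑ p ∈ P, w p * f p := by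
    rw [← hwx]
    rw [show f (∑ i ∈ P, w i • id i) = (hf.mk' f) (∑ i ∈ P, w i • id i) from rfl, map_sum]
    simp [smul_eq_mul]
  have hkey : ∀ p ∈ P, p ≠ s → w p = 0 := by
    by_contra hcon
    push_neg at hcon
    obtain ⟨p₀, hp₀P, hp₀ne, hp₀w⟩ := hcon
    have hp₀pos : 0 < w p₀ := lt_of_le_of_ne (hw0 p₀ hp₀P) (Ne.symm hp₀w)
    have hlt : ∑ p ∈ P, w p * f p < ∑ p ∈ P, w p * f s := by
      apply Finset.sum_lt_sum
      · intro p hp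
        by_cases hps : p = s
        · subst hps; rfl
        · exact mul_le_mul_of_nonneg_left (le_of_lt (h p hp hps)) (hw0 p hp)
      · exact ⟨p₀, hp₀P, by
          have := h p₀ hp₀P hp₀ne
          exact mul_lt_mul_of_pos_left this hp₀pos⟩
    rw [← Finset.sum_mul, hw1, one_mul] at hlt
    rw [hfxsum] at hfx
    exact absurd hfx (not_le.mpr hlt)
  have hws : w s = 1 := by
    rw [← hw1]
    rw [Finset.sum_eq_single_of_mem s hs]
    intro p hp hps
    exact hkey p hp hps
  rw [← hwx, Finset.sum_eq_single_of_mem s hs]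
  · simp [hws]
  · intro p hp hps
    simp [hkey p hp hps]

theorem rotate_strips_common_point (P Q : Finset (ℝ × ℝ)) (s : ℝ × ℝ)
    (hsP : s ∈ P) (hsQ : s ∈ Q)
    (hP : ∀ p ∈ P, p ≠ s → p.1 < s.1)
    (hQ : ∀ q ∈ Q, q ≠ s → s.1 < q.1) :
    ∃ δ₀ : ℝ, 0 < δ₀ ∧ ∀ δ : ℝ, |δ| < δ₀ →
      (convexHull ℝ (P : Set (ℝ × ℝ)) + ray (δ, -1)) ∩
        (convexHull ℝ (Q : Set (ℝ × ℝ)) + ray (δ, -1)) =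
        ({s} : Set (ℝ × ℝ)) + ray (δ, -1) := by
  classical
  set T := (P ∪ Q).erase s with hT
  have hTne : ∀ p ∈ T, p.1 ≠ s.1 := by
    intro p hp
    rw [hT, Finset.mem_erase, Finset.mem_union] at hp
    obtain ⟨hne, hp | hp⟩ := hp
    · exact ne_of_lt (hP p hp hne)
    · exact ne_of_gt (hQ p hp hne)
  set g : ℝ × ℝ → ℝ := fun p => |p.1 - s.1| / (|p.2 - s.2| + 1) with hg
  set S := insert (1:ℝ) (T.image g) with hS
  have hSne : S.Nonempty := ⟨1, Finset.mem_insert_self _ _⟩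
  refine ⟨S.min' hSne, ?_, ?_⟩
  · rw [Finset.lt_min'_iff]
    intro b hb
    rw [hS, Finset.mem_insert] at hb
    rcases hb with rfl | hb
    · norm_num
    · obtain ⟨p, hp, rfl⟩ := Finset.mem_image.mp hb
      have h1 : 0 < |p.1 - s.1| := abs_pos.mpr (sub_ne_zero.mpr (hTne p hp))
      have h2 : (0:ℝ) < |p.2 - s.2| + 1 := by positivity
      exact div_pos h1 h2
  · intro δ hδ
    have hkey : ∀ p ∈ (P ∪ Q), p ≠ s → |δ * (p.2 - s.2)| < |p.1 - s.1| := by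
      intro p hp hne
      have hpT : p ∈ T := Finset.mem_erase.mpr ⟨hne, hp⟩
      have hgS : g p ∈ S := Finset.mem_insert_of_mem (Finset.mem_image_of_mem g hpT)
      have h3 := hδ.trans_le (S.min'_le _ hgS)
      have h2 : (0:ℝ) < |p.2 - s.2| + 1 := by positivity
      rw [hg] at h3
      rw [lt_div_iff₀ h2] at h3
      rw [abs_mul]
      nlinarith [abs_nonneg δ, abs_nonneg (p.2 - s.2)]
    set f : ℝ × ℝ → ℝ := fun x => x.1 + δ * x.2 with hf
    have hflin : IsLinearMap ℝ f := by
      constructor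
      · intro a b
        simp only [hf, Prod.fst_add, Prod.snd_add]
        ring
      · intro c a
        simp only [hf, Prod.smul_fst, Prod.smul_snd, smul_eq_mul]
        ring
    have hPf : ∀ p ∈ P, p ≠ s → f p < f s := by
      intro p hp hne
      have hk := hkey p (Finset.mem_union_left _ hp) hne
      have h1 : p.1 < s.1 := hP p hp hne
      have e1 : |p.1 - s.1| = s.1 - p.1 := by
        rw [abs_sub_comm]; exact abs_of_pos (by linarith)
      have e2 : δ * (p.2 - s.2) < s.1 - p.1 := e1 ▸ (le_abs_self _).trans_lt hk
      simp only [hf]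
      nlinarith
    have hQf : ∀ q ∈ Q, q ≠ s → f s < f q := by
      intro q hq hne
      have hk := hkey q (Finset.mem_union_right _ hq) hne
      have h1 : s.1 < q.1 := hQ q hq hne
      have e1 : |q.1 - s.1| = q.1 - s.1 := abs_of_pos (by linarith)
      rw [e1] at hk
      have e2 : -(q.1 - s.1) < δ * (q.2 - s.2) := (abs_lt.mp hk).1
      simp only [hf]
      nlinarith
    have hfneg : IsLinearMap ℝ (fun x => -(f x)) :=
      ⟨fun a b => by rw [hflin.map_add]; ring, fun c a => by rw [hflin.map_smul, smul_neg]⟩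
    have hPhull : convexHull ℝ (P : Set (ℝ × ℝ)) ⊆ {x | f x ≤ f s} := by
      apply convexHull_min _ (convex_halfSpace_le hflin _)
      intro p hp
      by_cases hps : p = s
      · subst hps; simp [Set.mem_setOf_eq]
      · exact le_of_lt (hPf p hp hps)
    have hQhull : convexHull ℝ (Q : Set (ℝ × ℝ)) ⊆ {x | f s ≤ f x} := by
      apply convexHull_min _ (convex_halfSpace_ge hflin _)
      intro q hq
      by_cases hqs : q = s
      · subst hqs; simp [Set.mem_setOf_eq]
      · exact le_of_lt (hQf q hq hqs)
    have hfv : f (δ, -1) = 0 := by simp [hf]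
    ext z
    constructor
    · rintro ⟨hz1, hz2⟩
      rw [Set.mem_add] at hz1 hz2
      obtain ⟨a, ha, u, ⟨t, ht, rfl⟩, rfl⟩ := hz1
      obtain ⟨b, hb, u', ⟨t', ht', rfl⟩, hz⟩ := hz2
      have hfab : f b = f a := by
        have := congrArg f hz
        rw [hflin.map_add, hflin.map_add, hflin.map_smul, hflin.map_smul] at this
        simp only [smul_eq_mul, hfv, mul_zero, add_zero] at this
        exact this
      have hfas : f a = f s := le_antisymm (hPhull ha) (hfab ▸ hQhull hb)
      have hae : a = s := hull_face_eq hflin P s hsP hPf a ha (le_of_eq hfas.symm)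
      rw [Set.mem_add]
      exact ⟨s, rfl, t • (δ, -1), ⟨t, ht, rfl⟩, by rw [hae]⟩
    · rw [Set.mem_add]
      rintro ⟨x, hx, u, ⟨t, ht, rfl⟩, rfl⟩
      rw [Set.mem_singleton_iff] at hx
      subst hx
      exact ⟨Set.mem_add.mpr ⟨x, subset_convexHull ℝ _ (Finset.mem_coe.mpr hsP),
          t • (δ, -1), ⟨t, ht, rfl⟩, rfl⟩,
        Set.mem_add.mpr ⟨x, subset_convexHull ℝ _ (Finset.mem_coe.mpr hsQ),
          t • (δ, -1), ⟨t, ht, rfl⟩, rfl⟩⟩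
end

section
/- Let t ≥ 3 be an odd integer, let d ≥ 1, and let G = {x ∈ ℝ^d : every coordinate of x is an integer belonging to [1, t]}. If ℓ₁ and ℓ₂ are two distinct affine lines in ℝ^d (one-dimensional affine subspaces) each containing at least t points of G, then ℓ₁ ∩ ℓ₂ ⊆ G; that is, the intersection of ℓ₁ and ℓ₂ is either empty or a single point all of whose coordinates are integers in [1, t]. -/
open Set

/-- The integer grid `{1, …, t}^d`, viewed as a subset of `ℝ^d`. -/
def grid (t d : ℕ) : Set (Fin d → ℝ) :=
  {x | ∀ c : Fin d, ∃ n : ℤ, x c = (n : ℝ) ∧ 1 ≤ n ∧ n ≤ (t : ℤ)}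

def good (t : ℕ) (d : ℕ) (p u : Fin d → ℤ) : Prop :=
  ∀ c, (u c = 0 ∧ 1 ≤ p c ∧ p c ≤ (t:ℤ)) ∨ (u c = 1 ∧ p c = 1) ∨ (u c = -1 ∧ p c = (t:ℤ))

lemma grid_finite (t d : ℕ) : (grid t d).Finite := by
  have : grid t d ⊆ (fun (f : Fin d → ℤ) (c : Fin d) => (f c : ℝ)) ''
      (Set.pi Set.univ fun _ : Fin d => Set.Icc (1:ℤ) t) := by
    intro x hx
    choose n hn h1 h2 using hx
    exact ⟨n, fun c _ => ⟨h1 c, h2 c⟩, by funext c; exact (hn c).symm⟩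
  exact ((Set.Finite.pi fun _ => Set.finite_Icc _ _).image _).subset this

lemma mem_grid_of (t d : ℕ) (p u : Fin d → ℤ) (hpu : good t d p u)
    (k : ℤ) (hk0 : 0 ≤ k) (hkt : k ≤ (t:ℤ) - 1) (x : Fin d → ℝ)
    (hx : ∀ c, x c = (p c : ℝ) + (k:ℝ) * (u c : ℝ)) : x ∈ grid t d := by
  intro c
  refine ⟨p c + k * u c, by rw [hx c]; push_cast; ring, ?_⟩
  rcases hpu c with ⟨h0, h1, h2⟩ | ⟨h1, h2⟩ | ⟨h1, h2⟩
  · rw [h0]; omega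
  · rw [h1, h2]; omega
  · rw [h1, h2]; omega

lemma line_struct (t d : ℕ) (ht : 3 ≤ t) (ℓ : AffineSubspace ℝ (Fin d → ℝ))
    (h₁ : Module.finrank ℝ ℓ.direction = 1)
    (hc : t ≤ ((ℓ : Set (Fin d → ℝ)) ∩ grid t d).ncard) :
    ∃ (p u : Fin d → ℤ),
      (ℓ : Set (Fin d → ℝ)) = {x | ∃ s : ℝ, ∀ c, x c = (p c : ℝ) + s * (u c : ℝ)} ∧
      (∃ c, u c ≠ 0) ∧ good t d p u := by
  set S := (ℓ : Set (Fin d → ℝ)) ∩ grid t d with hSdef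
  have hSfin : S.Finite := ((grid_finite t d).subset (inter_subset_right))
  -- two distinct points of S
  have h2S : 1 < S.ncard := lt_of_lt_of_le (by omega) hc
  obtain ⟨a, b, ha, hb, hab⟩ := (Set.one_lt_ncard_iff hSfin).mp h2S
  -- coordinate where they differ
  have : a - b ≠ 0 := sub_ne_zero_of_ne hab
  obtain ⟨c₀, hc₀⟩ : ∃ c₀, a c₀ - b c₀ ≠ 0 := by
    by_contra h; push_neg at h
    exact hab (funext fun c => by have := h c; linarith [sub_eq_zero.mp (h c)])
  -- direction is spanned by a - b
  have hmem : a - b ∈ ℓ.direction := by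
    have := AffineSubspace.vsub_mem_direction ha.1 hb.1
    rwa [vsub_eq_sub] at this
  have hspan : Submodule.span ℝ {a - b} = ℓ.direction := by
    apply Submodule.eq_of_le_of_finrank_le
    · rw [Submodule.span_le, Set.singleton_subset_iff]; exact hmem
    · rw [h₁, finrank_span_singleton this]
  -- projection to coordinate c₀ is injective on ℓ
  have hinj : Set.InjOn (fun x : Fin d → ℝ => x c₀) (ℓ : Set (Fin d → ℝ)) := by
    intro x hx y hy hxy
    have hxy' : x - y ∈ ℓ.direction := by
      have := AffineSubspace.vsub_mem_direction hx hy
      rwa [vsub_eq_sub] at this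
    rw [← hspan, Submodule.mem_span_singleton] at hxy'
    obtain ⟨r, hr⟩ := hxy'
    have h0 : r * (a c₀ - b c₀) = 0 := by
      have := congrFun hr c₀
      simp only [Pi.smul_apply, smul_eq_mul, Pi.sub_apply] at this
      simp only [this, hxy, sub_self]
    have : r = 0 := by
      rcases mul_eq_zero.mp h0 with h | h
      · exact h
      · exact absurd h hc₀
    rw [this, zero_smul] at hr
    have := sub_eq_zero.mp hr.symm
    exact this
  -- the image of S under the projection is exactly {1, ..., t}
  set I : Set ℝ := (fun n : ℤ => (n : ℝ)) '' (Set.Icc 1 (t:ℤ)) with hIdef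
  have hIcard : I.ncard = t := by
    rw [hIdef, Set.ncard_image_of_injective _ Int.cast_injective,
      ← Finset.coe_Icc, Set.ncard_coe_finset, Int.card_Icc]
    omega
  have hIfin : I.Finite := ((Set.finite_Icc _ _).image _)
  have hTsub : (fun x : Fin d → ℝ => x c₀) '' S ⊆ I := by
    rintro - ⟨x, hx, rfl⟩
    obtain ⟨n, hn, h1, h2⟩ := hx.2 c₀
    exact ⟨n, ⟨h1, h2⟩, hn.symm⟩
  have hTI : (fun x : Fin d → ℝ => x c₀) '' S = I := by
    apply Set.eq_of_subset_of_ncard_le hTsub _ hIfin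
    rw [Set.ncard_image_of_injOn (hinj.mono inter_subset_left), hIcard]
    exact hc
  have key : ∀ j : ℤ, 1 ≤ j → j ≤ (t:ℤ) → ∃ x, x ∈ S ∧ x c₀ = (j:ℝ) := by
    intro j h1 h2
    have : (j:ℝ) ∈ I := ⟨j, ⟨h1, h2⟩, rfl⟩
    rw [← hTI] at this
    obtain ⟨x, hx, hxc⟩ := this
    exact ⟨x, hx, hxc⟩
  obtain ⟨P1, hP1S, hP1c⟩ := key 1 le_rfl (by omega)
  obtain ⟨P2, hP2S, hP2c⟩ := key 2 (by omega) (by omega)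
  obtain ⟨Pt, hPtS, hPtc⟩ := key (t:ℤ) (by omega) le_rfl
  choose p hp hp1 hp2 using hP1S.2
  choose n2 hn2 hn21 hn22 using hP2S.2
  choose nt hnt hnt1 hnt2 using hPtS.2
  -- direction is spanned by P2 - P1
  have hvc₀ : P2 c₀ - P1 c₀ = 1 := by rw [hP1c, hP2c]; norm_num
  have hvne : P2 - P1 ≠ 0 := by
    intro h
    have := congrFun h c₀
    simp only [Pi.sub_apply, Pi.zero_apply] at this
    rw [this] at hvc₀; norm_num at hvc₀
  have hvmem : P2 - P1 ∈ ℓ.direction := by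
    have := AffineSubspace.vsub_mem_direction hP2S.1 hP1S.1
    rwa [vsub_eq_sub] at this
  have hspan2 : Submodule.span ℝ {P2 - P1} = ℓ.direction := by
    apply Submodule.eq_of_le_of_finrank_le
    · rw [Submodule.span_le, Set.singleton_subset_iff]; exact hvmem
    · rw [h₁, finrank_span_singleton hvne]
  -- description of ℓ as a set
  have hset : (ℓ : Set (Fin d → ℝ)) =
      {x | ∃ s : ℝ, ∀ c, x c = P1 c + s * (P2 c - P1 c)} := by
    ext x
    rw [SetLike.mem_coe, ← AffineSubspace.vsub_right_mem_direction_iff_mem hP1S.1 x, ← hspan2,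
      Submodule.mem_span_singleton]
    constructor
    · rintro ⟨s, hs⟩
      refine ⟨s, fun c => ?_⟩
      have := congrFun hs c
      simp only [Pi.smul_apply, smul_eq_mul, vsub_eq_sub, Pi.sub_apply] at this
      linarith
    · rintro ⟨s, hs⟩
      refine ⟨s, funext fun c => ?_⟩
      simp only [Pi.smul_apply, smul_eq_mul, vsub_eq_sub, Pi.sub_apply]
      have := hs c
      linarith
  -- Pt = P1 + (t-1) • (P2 - P1)
  have hPtline : ∀ c, Pt c = P1 c + ((t:ℝ) - 1) * (P2 c - P1 c) := by
    have : Pt ∈ (ℓ : Set (Fin d → ℝ)) := hPtS.1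
    rw [hset] at this
    obtain ⟨s, hs⟩ := this
    have hsc : s = (t:ℝ) - 1 := by
      have := hs c₀
      rw [hvc₀, hP1c, hPtc] at this
      push_cast at this
      linarith
    rw [hsc] at hs
    exact hs
  have hcast : ∀ c, ((n2 c - p c : ℤ) : ℝ) = P2 c - P1 c := by
    intro c; push_cast; rw [← hp c, ← hn2 c]
  refine ⟨p, fun c => n2 c - p c, ?_, ⟨c₀, ?_⟩, ?_⟩
  · rw [hset]
    ext x
    simp only [Set.mem_setOf_eq]
    constructor
    · rintro ⟨s, hs⟩
      refine ⟨s, fun c => ?_⟩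
      rw [hcast c, ← hp c]; exact hs c
    · rintro ⟨s, hs⟩
      refine ⟨s, fun c => ?_⟩
      have := hs c
      rw [hcast c, ← hp c] at this; exact this
  · show n2 c₀ - p c₀ ≠ 0
    intro h
    have h2 := hcast c₀
    rw [h] at h2
    rw [hvc₀] at h2
    norm_num at h2
  · intro c
    beta_reduce
    have heq : nt c = p c + ((t:ℤ) - 1) * (n2 c - p c) := by
      have h0 := hPtline c
      rw [hp c, hn2 c, hnt c] at h0
      exact_mod_cast h0
    have b1 := hp1 c; have b2 := hp2 c; have b3 := hnt1 c; have b4 := hnt2 c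
    set k := n2 c - p c with hk
    have hkk : ((t:ℤ) - 1) * k = nt c - p c := by linarith
    have hle : k ≤ 1 := by
      have h1 : ((t:ℤ) - 1) * k ≤ ((t:ℤ) - 1) * 1 := by
        rw [hkk]; omega
      exact le_of_mul_le_mul_left h1 (by omega)
    have hge : -1 ≤ k := by
      have h1 : ((t:ℤ) - 1) * (-1) ≤ ((t:ℤ) - 1) * k := by
        rw [hkk]; omega
      exact le_of_mul_le_mul_left h1 (by omega)
    interval_cases k <;> omega
theorem grid_lines_intersect_in_grid (t d : ℕ) (ht : 3 ≤ t) (htodd : Odd t)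
    (hd : 1 ≤ d) (ℓ₁ ℓ₂ : AffineSubspace ℝ (Fin d → ℝ))
    (h₁ : Module.finrank ℝ ℓ₁.direction = 1)
    (h₂ : Module.finrank ℝ ℓ₂.direction = 1)
    (hne : ℓ₁ ≠ ℓ₂)
    (hc₁ : t ≤ ((ℓ₁ : Set (Fin d → ℝ)) ∩ grid t d).ncard)
    (hc₂ : t ≤ ((ℓ₂ : Set (Fin d → ℝ)) ∩ grid t d).ncard) :
    (ℓ₁ : Set (Fin d → ℝ)) ∩ (ℓ₂ : Set (Fin d → ℝ)) ⊆ grid t d := by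
  obtain ⟨p, u, hset1, ⟨c₁, hc₁u⟩, hgood1⟩ := line_struct t d ht ℓ₁ h₁ hc₁
  obtain ⟨q, w, hset2, ⟨c₂, hc₂w⟩, hgood2⟩ := line_struct t d ht ℓ₂ h₂ hc₂
  intro x hx
  have hx1 := hx.1; rw [hset1] at hx1; obtain ⟨s, hs⟩ := hx1
  have hx2 := hx.2; rw [hset2] at hx2; obtain ⟨r, hr⟩ := hx2
  have E : ∀ c, (p c : ℝ) + s * u c = (q c : ℝ) + r * w c :=
    fun c => (hs c).symm.trans (hr c)
  -- helpers to conclude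
  have done1 : ∀ k : ℤ, s = (k : ℝ) → 0 ≤ k → k ≤ (t:ℤ) - 1 → x ∈ grid t d := by
    intro k hk h0 h1
    exact mem_grid_of t d p u hgood1 k h0 h1 x (fun c => by rw [hs c, hk])
  have done2 : ∀ k : ℤ, r = (k : ℝ) → 0 ≤ k → k ≤ (t:ℤ) - 1 → x ∈ grid t d := by
    intro k hk h0 h1
    exact mem_grid_of t d q w hgood2 k h0 h1 x (fun c => by rw [hr c, hk])
  by_cases hA : ∃ c, u c ≠ 0 ∧ w c = 0
  · obtain ⟨c, hu0, hw0⟩ := hA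
    have hq := hgood2 c
    have hqb : 1 ≤ q c ∧ q c ≤ (t:ℤ) := by
      rcases hq with ⟨_, h⟩ | ⟨h, _⟩ | ⟨h, _⟩
      · exact h
      · omega
      · omega
    rcases hgood1 c with ⟨h, _⟩ | ⟨hu1, hp1⟩ | ⟨hu1, hp1⟩
    · exact absurd h hu0
    · refine done1 (q c - 1) ?_ (by omega) (by omega)
      have := E c; rw [hu1, hp1, hw0] at this; push_cast at this ⊢; linarith
    · refine done1 ((t:ℤ) - q c) ?_ (by omega) (by omega)
      have := E c; rw [hu1, hp1, hw0] at this; push_cast at this ⊢; linarith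
  · by_cases hB : ∃ c, w c ≠ 0 ∧ u c = 0
    · obtain ⟨c, hw0, hu0⟩ := hB
      have hp' := hgood1 c
      have hpb : 1 ≤ p c ∧ p c ≤ (t:ℤ) := by
        rcases hp' with ⟨_, h⟩ | ⟨h, _⟩ | ⟨h, _⟩
        · exact h
        · omega
        · omega
      rcases hgood2 c with ⟨h, _⟩ | ⟨hw1, hq1⟩ | ⟨hw1, hq1⟩
      · exact absurd h hw0
      · refine done2 (p c - 1) ?_ (by omega) (by omega)
        have := E c; rw [hw1, hq1, hu0] at this; push_cast at this ⊢; linarith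
      · refine done2 ((t:ℤ) - p c) ?_ (by omega) (by omega)
        have := E c; rw [hw1, hq1, hu0] at this; push_cast at this ⊢; linarith
    · push_neg at hA hB
      -- zero sets coincide
      have hzero : ∀ c, u c = 0 ↔ w c = 0 := by
        intro c
        constructor
        · intro h; by_contra h'; exact (hB c h' h).elim
        · intro h; by_contra h'; exact (hA c h' h).elim
      have hpq : ∀ c, u c = 0 → p c = q c := by
        intro c h
        have hw0 := (hzero c).mp h
        have := E c; rw [h, hw0] at this; push_cast at this
        exact_mod_cast (by linarith : (p c : ℝ) = q c)
      have hsr_of : ∀ c, u c ≠ 0 → u c = w c → s = r := by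
        intro c h0 hm
        rcases hgood1 c with ⟨h, _⟩ | ⟨hu1, hp1⟩ | ⟨hu1, hp1⟩
        · exact absurd h h0
        · rcases hgood2 c with ⟨h, _⟩ | ⟨hw1, hq1⟩ | ⟨hw1, hq1⟩
          · omega
          · have := E c; rw [hu1, hp1, hw1, hq1] at this; push_cast at this; linarith
          · omega
        · rcases hgood2 c with ⟨h, _⟩ | ⟨hw1, hq1⟩ | ⟨hw1, hq1⟩
          · omega
          · omega
          · have := E c; rw [hu1, hp1, hw1, hq1] at this; push_cast at this; linarith
      have hsum_of : ∀ c, u c ≠ 0 → u c = -w c → s + r = (t:ℝ) - 1 := by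
        intro c h0 hm
        rcases hgood1 c with ⟨h, _⟩ | ⟨hu1, hp1⟩ | ⟨hu1, hp1⟩
        · exact absurd h h0
        · rcases hgood2 c with ⟨h, _⟩ | ⟨hw1, hq1⟩ | ⟨hw1, hq1⟩
          · omega
          · omega
          · have := E c; rw [hu1, hp1, hw1, hq1] at this; push_cast at this; linarith
        · rcases hgood2 c with ⟨h, _⟩ | ⟨hw1, hq1⟩ | ⟨hw1, hq1⟩
          · omega
          · have := E c; rw [hu1, hp1, hw1, hq1] at this; push_cast at this; linarith
          · omega
      by_cases hN : ∃ c, u c ≠ 0 ∧ u c = -w c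
      · by_cases hM : ∃ c, u c ≠ 0 ∧ u c = w c
        · -- midpoint case
          obtain ⟨c3, h3, h3'⟩ := hM
          obtain ⟨c4, h4, h4'⟩ := hN
          have e1 : s = r := hsr_of c3 h3 h3'
          have e2 : s + r = (t:ℝ) - 1 := hsum_of c4 h4 h4'
          obtain ⟨m, hm⟩ := htodd
          refine done1 (m : ℤ) ?_ (by omega) (by omega)
          have : (t : ℝ) = 2 * m + 1 := by exact_mod_cast congrArg (Nat.cast : ℕ → ℝ) hm
          push_cast
          linarith
        · -- all nonzero coordinates mismatch: lines coincide
          push_neg at hM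
          exfalso
          apply hne
          apply SetLike.coe_injective
          rw [hset1, hset2]
          have hcase : ∀ c, (u c = 0 ∧ w c = 0 ∧ p c = q c) ∨
              (u c = 1 ∧ p c = 1 ∧ w c = -1 ∧ q c = (t:ℤ)) ∨
              (u c = -1 ∧ p c = (t:ℤ) ∧ w c = 1 ∧ q c = 1) := by
            intro c
            by_cases h : u c = 0
            · exact Or.inl ⟨h, (hzero c).mp h, hpq c h⟩
            · have hw0 : w c ≠ 0 := fun h' => h ((hzero c).mpr h')
              have := hM c h
              rcases hgood1 c with ⟨h', _⟩ | ⟨hu1, hp1⟩ | ⟨hu1, hp1⟩ <;>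
                rcases hgood2 c with ⟨h'', _⟩ | ⟨hw1, hq1⟩ | ⟨hw1, hq1⟩
              · omega
              · omega
              · omega
              · omega
              · omega
              · exact Or.inr (Or.inl ⟨hu1, hp1, hw1, hq1⟩)
              · omega
              · exact Or.inr (Or.inr ⟨hu1, hp1, hw1, hq1⟩)
              · omega
          ext y
          simp only [Set.mem_setOf_eq]
          constructor
          · rintro ⟨s', hs'⟩
            refine ⟨(t:ℝ) - 1 - s', fun c => ?_⟩
            have hyc := hs' c
            rcases hcase c with ⟨h1, h2, h3⟩ | ⟨h1, h2, h3, h4⟩ | ⟨h1, h2, h3, h4⟩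
            · rw [h1, h3] at hyc; rw [h2]; push_cast at hyc ⊢; linarith
            · rw [h1, h2] at hyc; rw [h3, h4]; push_cast at hyc ⊢; linarith
            · rw [h1, h2] at hyc; rw [h3, h4]; push_cast at hyc ⊢; linarith
          · rintro ⟨s', hs'⟩
            refine ⟨(t:ℝ) - 1 - s', fun c => ?_⟩
            have hyc := hs' c
            rcases hcase c with ⟨h1, h2, h3⟩ | ⟨h1, h2, h3, h4⟩ | ⟨h1, h2, h3, h4⟩
            · rw [h2, ← h3] at hyc; rw [h1]; push_cast at hyc ⊢; linarith
            · rw [h3, h4] at hyc; rw [h1, h2]; push_cast at hyc ⊢; linarith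
            · rw [h3, h4] at hyc; rw [h1, h2]; push_cast at hyc ⊢; linarith
      · -- all nonzero coordinates match: lines coincide
        push_neg at hN
        exfalso
        apply hne
        apply SetLike.coe_injective
        rw [hset1, hset2]
        have hpq' : p = q := by
          funext c
          by_cases h : u c = 0
          · exact hpq c h
          · have hw0 : w c ≠ 0 := fun h' => h ((hzero c).mpr h')
            have := hN c h
            rcases hgood1 c with ⟨h', _⟩ | ⟨hu1, hp1⟩ | ⟨hu1, hp1⟩ <;>
              rcases hgood2 c with ⟨h'', _⟩ | ⟨hw1, hq1⟩ | ⟨hw1, hq1⟩ <;> omega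
        have huw : u = w := by
          funext c
          by_cases h : u c = 0
          · rw [h, ((hzero c).mp h)]
          · have hw0 : w c ≠ 0 := fun h' => h ((hzero c).mpr h')
            have := hN c h
            rcases hgood1 c with ⟨h', _⟩ | ⟨hu1, _⟩ | ⟨hu1, _⟩ <;>
              rcases hgood2 c with ⟨h'', _⟩ | ⟨hw1, _⟩ | ⟨hw1, _⟩ <;> omega
        rw [hpq', huw]
end

section
/- If a line ℓ in ℝ^d contains at least t points of the grid G = {x ∈ ℝ^d : every coordinate of x is an integer in [1, t]}, where t ≥ 2, then for every coordinate index c ∈ {1, …, d}, the set of c-th coordinates of the points of ℓ ∩ G is either a single value or equals the whole set {1, 2, …, t}. -/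
open Set

theorem grid_line_coordinates (t d : ℕ) (ht : 2 ≤ t)
    (ℓ : AffineSubspace ℝ (Fin d → ℝ))
    (hℓ : Module.finrank ℝ ℓ.direction = 1)
    (hcard : t ≤ ((ℓ : Set (Fin d → ℝ)) ∩ grid t d).ncard) (c : Fin d) :
    (∃ a : ℝ, (fun x => x c) '' ((ℓ : Set (Fin d → ℝ)) ∩ grid t d) = {a}) ∨
    (fun x => x c) '' ((ℓ : Set (Fin d → ℝ)) ∩ grid t d) =
      {y : ℝ | ∃ n : ℤ, y = (n : ℝ) ∧ 1 ≤ n ∧ n ≤ (t : ℤ)} := by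
  set S := (ℓ : Set (Fin d → ℝ)) ∩ grid t d with hS
  have ht0 : S.ncard ≠ 0 := by omega
  have hne : S.Nonempty := Set.nonempty_of_ncard_ne_zero ht0
  obtain ⟨v, hv0, hvspan⟩ := finrank_eq_one_iff'.mp hℓ
  by_cases hvc : (v : Fin d → ℝ) c = 0
  · left
    obtain ⟨p, hp⟩ := hne
    refine ⟨p c, ?_⟩
    ext y
    simp only [Set.mem_image, Set.mem_singleton_iff]
    constructor
    · rintro ⟨x, hx, rfl⟩
      have hxp : x - p ∈ ℓ.direction := AffineSubspace.vsub_mem_direction hx.1 hp.1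
      obtain ⟨k, hk⟩ := hvspan ⟨x - p, hxp⟩
      have hk' : k • (v : Fin d → ℝ) = x - p := congrArg Subtype.val hk
      have := congrFun hk' c
      simp [hvc] at this
      have : x c - p c = 0 := by
        simpa [Pi.sub_apply] using this.symm
      linarith
    · rintro rfl
      exact ⟨p, hp, rfl⟩
  · right
    have hinj : Set.InjOn (fun x : Fin d → ℝ => x c) S := by
      intro x hx y hy hxy
      have hxy' : x - y ∈ ℓ.direction := AffineSubspace.vsub_mem_direction hx.1 hy.1
      obtain ⟨k, hk⟩ := hvspan ⟨x - y, hxy'⟩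
      have hk' : k • (v : Fin d → ℝ) = x - y := congrArg Subtype.val hk
      have hkc := congrFun hk' c
      have hxc : x c - y c = 0 := by simpa using sub_eq_zero_of_eq hxy
      rw [Pi.smul_apply, Pi.sub_apply, hxc, smul_eq_mul] at hkc
      have hk0 : k = 0 := by
        rcases mul_eq_zero.mp hkc with h | h
        · exact h
        · exact absurd h hvc
      rw [hk0, zero_smul] at hk'
      have : x - y = 0 := hk'.symm
      exact sub_eq_zero.mp this
    have hsub : (fun x : Fin d → ℝ => x c) '' S ⊆
        {y : ℝ | ∃ n : ℤ, y = (n : ℝ) ∧ 1 ≤ n ∧ n ≤ (t : ℤ)} := by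
      rintro y ⟨x, hx, rfl⟩
      obtain ⟨n, hn, h1, h2⟩ := hx.2 c
      exact ⟨n, hn, h1, h2⟩
    have hTeq : {y : ℝ | ∃ n : ℤ, y = (n : ℝ) ∧ 1 ≤ n ∧ n ≤ (t : ℤ)} =
        ((Finset.Icc (1:ℤ) t).image (Int.cast : ℤ → ℝ) : Set ℝ) := by
      ext y
      simp only [Set.mem_setOf_eq, Finset.coe_image, Set.mem_image, Finset.mem_coe,
        Finset.mem_Icc]
      constructor
      · rintro ⟨n, rfl, h1, h2⟩; exact ⟨n, ⟨h1, h2⟩, rfl⟩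
      · rintro ⟨n, ⟨h1, h2⟩, rfl⟩; exact ⟨n, rfl, h1, h2⟩
    have hTcard : {y : ℝ | ∃ n : ℤ, y = (n : ℝ) ∧ 1 ≤ n ∧ n ≤ (t : ℤ)}.ncard = t := by
      rw [hTeq, Set.ncard_coe_finset, Finset.card_image_of_injective _ Int.cast_injective,
        Int.card_Icc]
      omega
    have hTfin : {y : ℝ | ∃ n : ℤ, y = (n : ℝ) ∧ 1 ≤ n ∧ n ≤ (t : ℤ)}.Finite := by
      rw [hTeq]; exact Finset.finite_toSet _
    have himg : ((fun x : Fin d → ℝ => x c) '' S).ncard = S.ncard :=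
      Set.ncard_image_of_injOn hinj
    apply Set.eq_of_subset_of_ncard_le hsub _ hTfin
    rw [himg, hTcard]
    exact hcard
end

section
/- Let λ ≥ 3 be an integer, let m ≥ 3, and let θ : Fin m → ℝ satisfy 0 < θ i < π for all i and ∑ᵢ θ i = (m − 2)·π. Then the number of indices i with θ i < 2π/λ is at most ⌈2λ/(λ − 2)⌉ − 1. (In particular, in any convex m-gon, at most ⌈2λ/(λ − 2)⌉ − 1 interior angles are less than 2π/λ.) -/
open Real

theorem few_small_angles (lam : ℕ) (hlam : 3 ≤ lam) (m : ℕ) (hm : 3 ≤ m)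
    (θ : Fin m → ℝ) (hθ : ∀ i, 0 < θ i ∧ θ i < π)
    (hsum : ∑ i, θ i = ((m : ℝ) - 2) * π) :
    ((Finset.univ.filter fun i => θ i < 2 * π / lam).card : ℤ)
      ≤ ⌈(2 * (lam : ℚ)) / ((lam : ℚ) - 2)⌉ - 1 := by
  have hπ := Real.pi_pos
  have hlamR : (3:ℝ) ≤ (lam:ℝ) := by exact_mod_cast hlam
  set S := Finset.univ.filter fun i => θ i < 2 * π / lam with hS
  set k := S.card with hk
  have hne : (Finset.univ : Finset (Fin m)).Nonempty := by
    exact ⟨⟨0, by omega⟩, Finset.mem_univ _⟩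
  have hlt : ∑ i, θ i < ∑ i, (if θ i < 2 * π / lam then 2 * π / (lam:ℝ) else π) := by
    apply Finset.sum_lt_sum_of_nonempty hne
    intro i _
    split
    · assumption
    · exact (hθ i).2
  have hkm : k ≤ m := by
    have := Finset.card_filter_le (Finset.univ : Finset (Fin m))
      (fun i => θ i < 2 * π / lam)
    simpa [hk, hS] using this
  have hcard : (Finset.univ.filter fun i => ¬ θ i < 2 * π / lam).card = m - k := by
    have := Finset.card_filter_add_card_filter_not
      (s := (Finset.univ : Finset (Fin m))) (p := fun i => θ i < 2 * π / lam)
    simp only [Finset.card_univ, Fintype.card_fin, ← hS, ← hk] at this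
    omega
  have hsplit : ∑ i, (if θ i < 2 * π / lam then 2 * π / (lam:ℝ) else π)
      = (k:ℝ) * (2 * π / lam) + ((m:ℝ) - k) * π := by
    rw [Finset.sum_ite, Finset.sum_const, Finset.sum_const, hcard]
    have : ((m - k : ℕ) : ℝ) = (m:ℝ) - k := by
      push_cast [hkm]; ring
    simp [← hS, ← hk, this, nsmul_eq_mul]
  rw [hsum, hsplit] at hlt
  -- derive k*(lam-2) < 2*lam in ℝ
  have hkey : (k:ℝ) * ((lam:ℝ) - 2) < 2 * (lam:ℝ) := by
    have hlam0 : (0:ℝ) < lam := by linarith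
    have h2 := mul_lt_mul_of_pos_right hlt hlam0
    have hl0 : (lam:ℝ) ≠ 0 := by linarith
    field_simp at h2
    nlinarith [hπ, h2]
  have hkeyZ : (k:ℤ) * ((lam:ℤ) - 2) < 2 * (lam:ℤ) := by exact_mod_cast hkey
  have hkeyQ : (k:ℚ) < 2 * (lam:ℚ) / ((lam:ℚ) - 2) := by
    rw [lt_div_iff₀ (by exact_mod_cast (by omega : (0:ℤ) < (lam:ℤ) - 2))]
    exact_mod_cast hkeyZ
  have : (k:ℤ) < ⌈2 * (lam:ℚ) / ((lam:ℚ) - 2)⌉ := by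
    rw [Int.lt_ceil]
    exact_mod_cast hkeyQ
  omega
end

section
/- Let k ≥ 2 and let x : Fin (2k − 1) → ℝ be strictly increasing. For each i, let p i = (x i, (x i)²) ∈ ℝ² be the corresponding point on the parabola y = x². Then the convex hull of the first k points {p i : i ≤ k − 1} and the convex hull of the last k points {p i : i ≥ k − 1} intersect exactly in the single point p(k − 1). Consequently, for any point b ∈ ℝ² with b ≠ p(k − 1), there is a set of k consecutive points among p 0, …, p(2k − 2) whose convex hull does not contain b. -/
open Set

theorem parabola_split (k : ℕ) (hk : 2 ≤ k) (x : Fin (2 * k - 1) → ℝ)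
    (hx : StrictMono x) (p : Fin (2 * k - 1) → ℝ × ℝ)
    (hp : ∀ i, p i = (x i, (x i) ^ 2)) :
    convexHull ℝ {q | ∃ i : Fin (2 * k - 1), (i : ℕ) ≤ k - 1 ∧ q = p i} ∩
      convexHull ℝ {q | ∃ i : Fin (2 * k - 1), k - 1 ≤ (i : ℕ) ∧ q = p i} =
      {p ⟨k - 1, by omega⟩} ∧
    ∀ b : ℝ × ℝ, b ≠ p ⟨k - 1, by omega⟩ →
      ∃ j : ℕ, j + k ≤ 2 * k - 1 ∧
        b ∉ convexHull ℝ
          {q | ∃ i : Fin (2 * k - 1), j ≤ (i : ℕ) ∧ (i : ℕ) < j + k ∧ q = p i} := by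
  have hm : k - 1 < 2 * k - 1 := by omega
  set m : Fin (2 * k - 1) := ⟨k - 1, hm⟩ with hmdef
  set c : ℝ := x m with hc
  set a : ℝ := x ⟨0, by omega⟩ with ha
  have hmono := hx.monotone
  set S₁ := {q : ℝ × ℝ | ∃ i : Fin (2 * k - 1), (i : ℕ) ≤ k - 1 ∧ q = p i} with hS1def
  set S₂ := {q : ℝ × ℝ | ∃ i : Fin (2 * k - 1), k - 1 ≤ (i : ℕ) ∧ q = p i} with hS2def
  have lin1 : IsLinearMap ℝ (fun q : ℝ × ℝ => q.1) := ⟨fun _ _ => rfl, fun _ _ => rfl⟩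
  have lin2 : IsLinearMap ℝ (fun q : ℝ × ℝ => q.2 - 2 * c * q.1) := by
    constructor <;> intros <;> simp [Prod.fst_add, Prod.snd_add] <;> ring
  have lin3 : IsLinearMap ℝ (fun q : ℝ × ℝ => q.2 - (a + c) * q.1) := by
    constructor <;> intros <;> simp [Prod.fst_add, Prod.snd_add] <;> ring
  have hpm : p m = (c, c ^ 2) := by rw [hp]
  -- key: intersection is {p m}
  have key : convexHull ℝ S₁ ∩ convexHull ℝ S₂ = {p m} := by
    apply Subset.antisymm
    · rintro q ⟨hq1, hq2⟩
      have h1 : q.1 ≤ c := by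
        refine convexHull_min ?_ (convex_halfSpace_le lin1 c) hq1
        rintro r ⟨i, hi, rfl⟩
        rw [hp]
        exact hmono (show i ≤ m by simpa [Fin.le_def, hmdef] using hi)
      have h2 : c ≤ q.1 := by
        refine convexHull_min ?_ (convex_halfSpace_ge lin1 c) hq2
        rintro r ⟨i, hi, rfl⟩
        rw [hp]
        exact hmono (show m ≤ i by simpa [Fin.le_def, hmdef] using hi)
      have h3 : -(c ^ 2) ≤ q.2 - 2 * c * q.1 := by
        refine convexHull_min ?_ (convex_halfSpace_ge lin2 (-(c ^ 2))) hq1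
        rintro r ⟨i, hi, rfl⟩
        rw [hp]
        show -(c ^ 2) ≤ (x i) ^ 2 - 2 * c * (x i)
        nlinarith [sq_nonneg (x i - c)]
      have h4 : q.2 - (a + c) * q.1 ≤ -(a * c) := by
        refine convexHull_min ?_ (convex_halfSpace_le lin3 (-(a * c))) hq1
        rintro r ⟨i, hi, rfl⟩
        rw [hp]
        show (x i) ^ 2 - (a + c) * (x i) ≤ -(a * c)
        have hai : a ≤ x i := hmono (by simp [Fin.le_def])
        have hic : x i ≤ c := hmono (by simpa [Fin.le_def, hmdef] using hi)
        nlinarith [mul_nonneg (sub_nonneg.2 hai) (sub_nonneg.2 hic)]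
      have hq1c : q.1 = c := le_antisymm h1 h2
      have hq2c : q.2 = c ^ 2 := by rw [hq1c] at h3 h4; nlinarith
      simp only [mem_singleton_iff, hpm]
      exact Prod.ext hq1c hq2c
    · rintro q rfl
      constructor
      · exact subset_convexHull ℝ S₁ ⟨m, by simp [hmdef], rfl⟩
      · exact subset_convexHull ℝ S₂ ⟨m, by simp [hmdef], rfl⟩
  refine ⟨key, ?_⟩
  intro b hb
  by_cases hb1 : b ∈ convexHull ℝ S₁
  · refine ⟨k - 1, by omega, ?_⟩
    have hset : {q : ℝ × ℝ | ∃ i : Fin (2 * k - 1), k - 1 ≤ (i : ℕ) ∧ (i : ℕ) < k - 1 + k ∧ q = p i} = S₂ := by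
      ext q
      constructor
      · rintro ⟨i, hi1, _, rfl⟩; exact ⟨i, hi1, rfl⟩
      · rintro ⟨i, hi1, rfl⟩; exact ⟨i, hi1, by omega, rfl⟩
    rw [hset]
    intro hb2
    exact hb (by have := key ▸ mem_inter hb1 hb2; simpa using this)
  · refine ⟨0, by omega, ?_⟩
    have hset : {q : ℝ × ℝ | ∃ i : Fin (2 * k - 1), 0 ≤ (i : ℕ) ∧ (i : ℕ) < 0 + k ∧ q = p i} = S₁ := by
      ext q
      constructor
      · rintro ⟨i, _, hi2, rfl⟩; exact ⟨i, by omega, rfl⟩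
      · rintro ⟨i, hi1, rfl⟩; exact ⟨i, by omega, by omega, rfl⟩
    rw [hset]
    exact hb1
end

section
/- Any 2t points with distinct x-coordinates form t parallel downward 2-strips: let t ≥ 1 and let p : Fin (2t) → ℝ² satisfy (p i).1 < (p j).1 whenever i < j. Let d = (0, −1) and for each j < t set R_j = convexHull{p(2j), p(2j+1)} + ray(d). Then for each j: interior(R_j) contains no point of the range of p, and frontier(R_j) intersected with the range of p equals {p(2j), p(2j+1)}; moreover the regions R_0, …, R_{t−1} are pairwise disjoint. -/
open Set Pointwise

lemma strip_mem {a b q : ℝ × ℝ} (hab : a.1 ≤ b.1)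
    (hq : q ∈ convexHull ℝ ({a, b} : Set (ℝ × ℝ)) + ray (0, -1)) :
    a.1 ≤ q.1 ∧ q.1 ≤ b.1 := by
  rw [Set.mem_add] at hq
  obtain ⟨c, hc, r, hr, rfl⟩ := hq
  rw [convexHull_pair] at hc
  obtain ⟨u, v, hu, hv, huv, rfl⟩ := hc
  obtain ⟨s, hs, rfl⟩ := hr
  simp only [Prod.fst_add, Prod.smul_fst, smul_eq_mul]
  have h1 : u * a.1 + v * b.1 + s * 0 - a.1 = v * (b.1 - a.1) := by
    rw [show u = 1 - v by linarith]; ring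
  have h2 : b.1 - (u * a.1 + v * b.1 + s * 0) = u * (b.1 - a.1) := by
    rw [show u = 1 - v by linarith]; ring
  constructor <;>
    nlinarith [mul_nonneg hv (sub_nonneg.2 hab), mul_nonneg hu (sub_nonneg.2 hab)]

lemma interior_strip {a b q : ℝ × ℝ} (hab : a.1 ≤ b.1)
    (hq : q ∈ interior (convexHull ℝ ({a, b} : Set (ℝ × ℝ)) + ray (0, -1))) :
    a.1 < q.1 ∧ q.1 < b.1 := by
  rw [mem_interior_iff_mem_nhds, Metric.mem_nhds_iff] at hq
  obtain ⟨ε, hε, hball⟩ := hq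
  have hm : ∀ x : ℝ, |x| ≤ ε/2 → (q.1 + x, q.2) ∈ Metric.ball q ε := by
    intro x hx
    simp only [Metric.mem_ball, Prod.dist_eq, Real.dist_eq]
    rw [max_lt_iff]
    constructor
    · calc |q.1 + x - q.1| = |x| := by ring_nf
        _ ≤ ε/2 := hx
        _ < ε := by linarith
    · simp only [sub_self, abs_zero]; linarith
  have h1 := strip_mem hab (hball (hm (-(ε/2)) (by rw [abs_neg, abs_of_nonneg] <;> linarith)))
  have h2 := strip_mem hab (hball (hm (ε/2) (by rw [abs_of_nonneg] <;> linarith)))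
  refine ⟨?_, ?_⟩
  · linarith [h1.1]
  · linarith [h2.2]

lemma closure_strip {a b q : ℝ × ℝ} (hab : a.1 ≤ b.1)
    (hq : q ∈ closure (convexHull ℝ ({a, b} : Set (ℝ × ℝ)) + ray (0, -1))) :
    a.1 ≤ q.1 ∧ q.1 ≤ b.1 := by
  have hcl : IsClosed {x : ℝ × ℝ | a.1 ≤ x.1 ∧ x.1 ≤ b.1} :=
    (isClosed_le continuous_const continuous_fst).inter
      (isClosed_le continuous_fst continuous_const)
  exact closure_minimal (fun x hx => strip_mem hab hx) hcl hq

lemma left_mem_strip {a b : ℝ × ℝ} :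
    a ∈ convexHull ℝ ({a, b} : Set (ℝ × ℝ)) + ray (0, -1) := by
  rw [Set.mem_add]
  exact ⟨a, subset_convexHull ℝ _ (by simp), 0, ⟨0, le_refl _, by simp⟩, by simp⟩

lemma right_mem_strip {a b : ℝ × ℝ} :
    b ∈ convexHull ℝ ({a, b} : Set (ℝ × ℝ)) + ray (0, -1) := by
  rw [Set.mem_add]
  exact ⟨b, subset_convexHull ℝ _ (by simp), 0, ⟨0, le_refl _, by simp⟩, by simp⟩

theorem two_strips (t : ℕ) (ht : 1 ≤ t) (p : Fin (2 * t) → ℝ × ℝ)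
    (hmono : ∀ i j : Fin (2 * t), i < j → (p i).1 < (p j).1)
    (R : Fin t → Set (ℝ × ℝ))
    (hR : ∀ j : Fin t, R j =
      convexHull ℝ
        ({p ⟨2 * (j : ℕ), by have := j.isLt; omega⟩,
          p ⟨2 * (j : ℕ) + 1, by have := j.isLt; omega⟩} : Set (ℝ × ℝ)) +
        ray (0, -1)) :
    (∀ j : Fin t, interior (R j) ∩ Set.range p = ∅) ∧
    (∀ j : Fin t, frontier (R j) ∩ Set.range p =
      ({p ⟨2 * (j : ℕ), by have := j.isLt; omega⟩,
        p ⟨2 * (j : ℕ) + 1, by have := j.isLt; omega⟩} : Set (ℝ × ℝ))) ∧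
    Pairwise fun j j' : Fin t => Disjoint (R j) (R j') := by
  -- abbreviations
  have hab : ∀ j : Fin t,
      (p ⟨2 * (j : ℕ), by have := j.isLt; omega⟩).1 <
      (p ⟨2 * (j : ℕ) + 1, by have := j.isLt; omega⟩).1 := by
    intro j
    exact hmono _ _ (by rw [Fin.lt_def]; simp)
  -- strict monotonicity on values
  have hmono' : ∀ (i j : Fin (2 * t)), (i : ℕ) < (j : ℕ) → (p i).1 < (p j).1 := by
    intro i j h
    exact hmono i j h
  refine ⟨?_, ?_, ?_⟩
  · -- interiors avoid range p
    intro j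
    rw [Set.eq_empty_iff_forall_notMem]
    rintro q ⟨hqi, k, rfl⟩
    rw [hR j] at hqi
    have h := interior_strip (le_of_lt (hab j)) hqi
    rcases lt_trichotomy (k : ℕ) (2 * (j : ℕ)) with hk | hk | hk
    · have := hmono' k ⟨2 * (j : ℕ), by have := j.isLt; omega⟩ hk
      linarith [h.1]
    · have hke : k = ⟨2 * (j : ℕ), by have := j.isLt; omega⟩ := Fin.ext hk
      rw [hke] at h
      linarith [h.1]
    · rcases eq_or_lt_of_le (Nat.succ_le_of_lt hk) with hk' | hk'
      · have hke : k = ⟨2 * (j : ℕ) + 1, by have := j.isLt; omega⟩ := Fin.ext hk'.symm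
        rw [hke] at h
        linarith [h.2]
      · have := hmono' ⟨2 * (j : ℕ) + 1, by have := j.isLt; omega⟩ k hk'
        linarith [h.2]
  · -- frontier meets range p exactly in two points
    intro j
    apply Set.eq_of_subset_of_subset
    · rintro q ⟨hqf, k, rfl⟩
      rw [hR j] at hqf
      have hcl := closure_strip (le_of_lt (hab j)) hqf.1
      rcases lt_trichotomy (k : ℕ) (2 * (j : ℕ)) with hk | hk | hk
      · have := hmono' k ⟨2 * (j : ℕ), by have := j.isLt; omega⟩ hk
        linarith [hcl.1]
      · have hke : k = ⟨2 * (j : ℕ), by have := j.isLt; omega⟩ := Fin.ext hk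
        rw [hke]
        exact Or.inl rfl
      · rcases eq_or_lt_of_le (Nat.succ_le_of_lt hk) with hk' | hk'
        · have hke : k = ⟨2 * (j : ℕ) + 1, by have := j.isLt; omega⟩ := Fin.ext hk'.symm
          rw [hke]
          exact Or.inr rfl
        · have := hmono' ⟨2 * (j : ℕ) + 1, by have := j.isLt; omega⟩ k hk'
          linarith [hcl.2]
    · rintro q (rfl | rfl)
      · refine ⟨⟨?_, ?_⟩, ⟨_, rfl⟩⟩
        · rw [hR j]; exact subset_closure left_mem_strip
        · rw [hR j]; intro h
          have := interior_strip (le_of_lt (hab j)) h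
          linarith [this.1]
      · refine ⟨⟨?_, ?_⟩, ⟨_, rfl⟩⟩
        · rw [hR j]; exact subset_closure right_mem_strip
        · rw [hR j]; intro h
          have := interior_strip (le_of_lt (hab j)) h
          linarith [this.2]
  · -- pairwise disjoint
    intro j j' hjj'
    have key : ∀ j j' : Fin t, (j : ℕ) < (j' : ℕ) → Disjoint (R j) (R j') := by
      intro j j' h
      rw [Set.disjoint_left]
      intro q hq hq'
      rw [hR j] at hq
      rw [hR j'] at hq'
      have h1 := strip_mem (le_of_lt (hab j)) hq
      have h2 := strip_mem (le_of_lt (hab j')) hq'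
      have := hmono' ⟨2 * (j : ℕ) + 1, by have := j.isLt; omega⟩
        ⟨2 * (j' : ℕ), by have := j'.isLt; omega⟩
        (show 2 * (j : ℕ) + 1 < 2 * (j' : ℕ) by omega)
      linarith [h1.2, h2.1]
    rcases lt_or_gt_of_ne hjj' with h | h
    · exact key j j' h
    · exact (key j' j h).symm
end
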